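/- arXiv:math/0612445 — 5 statements merged into one kernel-verified Lean document; each statement's English description precedes it below -/
import Mathlib

section
/- Let (a_ε)_{ε∈(0,1]} and (b_ε)_{ε∈(0,1]} be moderate nets of smooth functions on ℝ which satisfy the G^∞-estimate on ℝ∖{0}: for every compact set K ⊂ ℝ∖{0} there exists p ≥ 0 such that for every integer k ≥ 0, sup_{x∈K} |a_ε^{(k)}(x)| = O(ε^{−p}) and sup_{x∈K} |b_ε^{(k)}(x)| = O(ε^{−p}) as ε → 0. Define v_ε(x,t) = ½(a_ε(x−t) + a_ε(x+t)) + ½∫_{x−t}^{x+t} b_ε(y)dy. Then (v_ε) satisfies the G^∞-estimate on ℝ²∖S, where S = {(x,t) ∈ ℝ² : |x| = |t|}: for every compact set K ⊂ ℝ²∖S there exists p ≥ 0 such that for every multi-index α, sup_{(x,t)∈K} |∂^α v_ε(x,t)| = O(ε^{−p}) as ε → 0. -/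
/-!
In the characteristic coordinates `x - t` and `x + t` the d'Alembert solution reads
`v_ε = ½ (a_ε(x - t) + a_ε(x + t)) + ½ (B_ε(x + t) - B_ε(x - t))`, with `B_ε` the primitive of
`b_ε` vanishing at `0`. Both coordinates map a compact set `K` off the light cone into a compact
set `K' ⊆ ℝ ∖ {0}`, on which `a_ε` and `b_ε` obey the `G^∞`-estimate with one exponent `p`;
differentiating along a linear coordinate costs only constants, and `B_ε^(k+1) = b_ε^(k)`.
Only `B_ε` itself escapes this: `|B_ε(y)| ≤ |y| sup_{[-M, M]} |b_ε|` is controlled by the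
moderateness of `b_ε`, with some exponent `p₀`, so `max p p₀` serves every derivative of `v_ε`.
-/

open Real Set Filter MeasureTheory Topology

noncomputable section

/-- A moderate net of smooth functions. -/
def ModerateNet {E : Type*} [NormedAddCommGroup E] [NormedSpace ℝ E]
    (u : ℝ → E → ℝ) : Prop :=
  (∀ ε ∈ Set.Ioc (0:ℝ) 1, ContDiff ℝ (⊤ : ℕ∞) (u ε)) ∧
  ∀ K : Set E, IsCompact K → ∀ k : ℕ, ∃ p : ℝ, 0 ≤ p ∧ ∃ C : ℝ, 0 < C ∧ ∃ ε₀ : ℝ, 0 < ε₀ ∧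
    ∀ ε ∈ Set.Ioc (0:ℝ) 1, ε ≤ ε₀ → ∀ x ∈ K,
      ‖iteratedFDeriv ℝ k (u ε) x‖ ≤ C * ε ^ (-p)

/-- The `G^∞`-estimate on an open set `Ω ⊆ ℝ²`: on each compact subset a single
exponent `p` controls all derivatives. -/
def GInfEstimateOn (Ω : Set (ℝ × ℝ)) (v : ℝ → ℝ × ℝ → ℝ) : Prop :=
  ∀ K : Set (ℝ × ℝ), K ⊆ Ω → IsCompact K → ∃ p : ℝ, 0 ≤ p ∧ ∀ k : ℕ,
    ∃ C : ℝ, 0 < C ∧ ∃ ε₀ : ℝ, 0 < ε₀ ∧ ∀ ε ∈ Set.Ioc (0:ℝ) 1, ε ≤ ε₀ →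
      ∀ q ∈ K, ‖iteratedFDeriv ℝ k (v ε) q‖ ≤ C * ε ^ (-p)

variable {E F : Type*} [NormedAddCommGroup E] [NormedSpace ℝ E]
  [NormedAddCommGroup F] [NormedSpace ℝ F]

-- The `C^k` condition is bundled so that `iteratedFDeriv` is additive along the net.
def HasNetDerivBound (u : ℝ → E → ℝ) (k : ℕ) (K : Set E) (p : ℝ) : Prop :=
  ∃ C, ∀ᶠ ε in 𝓝[>] 0,
    ContDiff ℝ k (u ε) ∧ ∀ x ∈ K, ‖iteratedFDeriv ℝ k (u ε) x‖ ≤ C * ε ^ (-p)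

namespace HasNetDerivBound

variable {u w : ℝ → E → ℝ} {k : ℕ} {K : Set E} {p q : ℝ}

theorem of_forall_Ioc (hu : ∀ ε ∈ Ioc (0 : ℝ) 1, ContDiff ℝ k (u ε)) {C ε₀ : ℝ} (hε₀ : 0 < ε₀)
    (hC : ∀ ε ∈ Ioc (0 : ℝ) 1, ε ≤ ε₀ → ∀ x ∈ K,
      ‖iteratedFDeriv ℝ k (u ε) x‖ ≤ C * ε ^ (-p)) :
    HasNetDerivBound u k K p :=
  ⟨C, by filter_upwards [Ioc_mem_nhdsGT one_pos, Ioc_mem_nhdsGT hε₀] with ε hε hεε₀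
    using ⟨hu ε hε, hC ε hε hεε₀.2⟩⟩

theorem exists_pos_bound (h : HasNetDerivBound u k K p) :
    ∃ C, 0 < C ∧ ∃ ε₀, 0 < ε₀ ∧ ∀ ε ∈ Ioc (0 : ℝ) 1, ε ≤ ε₀ → ∀ x ∈ K,
      ‖iteratedFDeriv ℝ k (u ε) x‖ ≤ C * ε ^ (-p) := by
  obtain ⟨C, hC⟩ := h
  obtain ⟨ε₀, hε₀, hbound⟩ := (nhdsGT_basis_Ioc (0 : ℝ)).eventually_iff.1 hC
  refine ⟨max C 1, by positivity, ε₀, hε₀, fun ε hε hεε₀ x hx => ?_⟩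
  calc ‖iteratedFDeriv ℝ k (u ε) x‖ ≤ C * ε ^ (-p) := (hbound ⟨hε.1, hεε₀⟩).2 x hx
    _ ≤ max C 1 * ε ^ (-p) :=
      mul_le_mul_of_nonneg_right (le_max_left C 1) (rpow_nonneg hε.1.le _)

theorem congr (h : HasNetDerivBound u k K p) (huw : ∀ᶠ ε in 𝓝[>] 0, u ε = w ε) :
    HasNetDerivBound w k K p := by
  obtain ⟨C, hC⟩ := h
  exact ⟨C, by filter_upwards [hC, huw] with ε hε hεuw using hεuw ▸ hε⟩

theorem mono_exponent (h : HasNetDerivBound u k K p) (hpq : p ≤ q) :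
    HasNetDerivBound u k K q := by
  obtain ⟨C, hC⟩ := h
  refine ⟨|C|, ?_⟩
  filter_upwards [hC, Ioc_mem_nhdsGT one_pos] with ε ⟨hu, hbound⟩ hε
  refine ⟨hu, fun x hx => (hbound x hx).trans ?_⟩
  calc C * ε ^ (-p) ≤ |C| * ε ^ (-p) :=
        mul_le_mul_of_nonneg_right (le_abs_self C) (rpow_nonneg hε.1.le _)
    _ ≤ |C| * ε ^ (-q) :=
        mul_le_mul_of_nonneg_left (rpow_le_rpow_of_exponent_ge hε.1 hε.2 (neg_le_neg hpq))
          (abs_nonneg C)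

theorem add (hu : HasNetDerivBound u k K p) (hw : HasNetDerivBound w k K p) :
    HasNetDerivBound (u + w) k K p := by
  obtain ⟨C, hC⟩ := hu
  obtain ⟨D, hD⟩ := hw
  refine ⟨C + D, ?_⟩
  filter_upwards [hC, hD] with ε ⟨hu, hCε⟩ ⟨hw, hDε⟩
  refine ⟨hu.add hw, fun x hx => ?_⟩
  rw [Pi.add_apply, iteratedFDeriv_add_apply hu.contDiffAt hw.contDiffAt, add_mul]
  exact (norm_add_le _ _).trans (add_le_add (hCε x hx) (hDε x hx))

theorem sub (hu : HasNetDerivBound u k K p) (hw : HasNetDerivBound w k K p) :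
    HasNetDerivBound (u - w) k K p := by
  obtain ⟨C, hC⟩ := hu
  obtain ⟨D, hD⟩ := hw
  refine ⟨C + D, ?_⟩
  filter_upwards [hC, hD] with ε ⟨hu, hCε⟩ ⟨hw, hDε⟩
  refine ⟨hu.sub hw, fun x hx => ?_⟩
  rw [Pi.sub_apply, iteratedFDeriv_sub_apply hu.contDiffAt hw.contDiffAt, add_mul]
  exact (norm_sub_le _ _).trans (add_le_add (hCε x hx) (hDε x hx))

theorem const_smul (c : ℝ) (hu : HasNetDerivBound u k K p) :
    HasNetDerivBound (c • u) k K p := by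
  obtain ⟨C, hC⟩ := hu
  refine ⟨|c| * C, ?_⟩
  filter_upwards [hC] with ε ⟨hu, hCε⟩
  refine ⟨hu.const_smul c, fun x hx => ?_⟩
  rw [Pi.smul_apply, iteratedFDeriv_const_smul_apply hu.contDiffAt, norm_smul,
    Real.norm_eq_abs, mul_assoc]
  exact mul_le_mul_of_nonneg_left (hCε x hx) (abs_nonneg c)

theorem comp_continuousLinearMap (hu : HasNetDerivBound u k K p) (L : F →L[ℝ] E)
    {T : Set F} (hL : MapsTo L T K) : HasNetDerivBound (fun ε => u ε ∘ L) k T p := by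
  obtain ⟨C, hC⟩ := hu
  refine ⟨C * ‖L‖ ^ k, ?_⟩
  filter_upwards [hC] with ε ⟨hu, hCε⟩
  refine ⟨hu.comp L.contDiff, fun x hx => ?_⟩
  rw [L.iteratedFDeriv_comp_right hu x le_rfl]
  calc _ ≤ ‖iteratedFDeriv ℝ k (u ε) (L x)‖ * ∏ _ : Fin k, ‖L‖ :=
        ContinuousMultilinearMap.norm_compContinuousLinearMap_le _ _
    _ ≤ C * ε ^ (-p) * ‖L‖ ^ k := by
        rw [Finset.prod_const, Finset.card_fin]; gcongr; exact hCε _ (hL hx)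
    _ = C * ‖L‖ ^ k * ε ^ (-p) := by ring

end HasNetDerivBound

theorem HasNetDerivBound.primitive_succ {b : ℝ → ℝ → ℝ} {k : ℕ} {K : Set ℝ} {p : ℝ}
    (hb : HasNetDerivBound b k K p) :
    HasNetDerivBound (fun ε y => ∫ s in (0 : ℝ)..y, b ε s) (k + 1) K p := by
  obtain ⟨C, hC⟩ := hb
  refine ⟨C, ?_⟩
  filter_upwards [hC] with ε ⟨hb, hCε⟩
  have hderiv : deriv (fun y => ∫ s in (0 : ℝ)..y, b ε s) = b ε :=
    funext (hb.continuous.deriv_integral _ 0)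
  refine ⟨?_, fun x hx => ?_⟩
  · rw [Nat.cast_succ, contDiff_succ_iff_deriv, hderiv]
    exact ⟨fun y => (hb.continuous.integral_hasStrictDerivAt 0 y).hasDerivAt.differentiableAt,
      by simp, hb⟩
  · rw [norm_iteratedFDeriv_eq_norm_iteratedDeriv, iteratedDeriv_succ', hderiv,
      ← norm_iteratedFDeriv_eq_norm_iteratedDeriv]
    exact hCε x hx

theorem HasNetDerivBound.primitive_zero {b : ℝ → ℝ → ℝ} {K : Set ℝ} {p M : ℝ}
    (hb : HasNetDerivBound b 0 (Metric.closedBall 0 M) p)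
    (hK : K ⊆ Metric.closedBall 0 M) :
    HasNetDerivBound (fun ε y => ∫ s in (0 : ℝ)..y, b ε s) 0 K p := by
  obtain ⟨C, hC⟩ := hb
  refine ⟨C * M, ?_⟩
  filter_upwards [hC] with ε ⟨hb, hCε⟩
  refine ⟨contDiff_zero.2 (intervalIntegral.continuous_primitive
    (fun _ _ => hb.continuous.intervalIntegrable _ _) 0), fun y hy => ?_⟩
  have hyM : |y - 0| ≤ M := by simpa only [Metric.mem_closedBall, Real.dist_eq] using hK hy
  have hball : ∀ s ∈ Set.uIoc 0 y, s ∈ Metric.closedBall 0 M := fun s hs => by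
    rw [Metric.mem_closedBall, Real.dist_eq]
    exact (abs_sub_left_of_mem_uIcc (uIoc_subset_uIcc hs)).trans hyM
  simp only [norm_iteratedFDeriv_zero] at hCε ⊢
  calc ‖∫ s in (0 : ℝ)..y, b ε s‖ ≤ C * ε ^ (-p) * |y - 0| :=
        intervalIntegral.norm_integral_le_of_norm_le_const fun s hs => hCε s (hball s hs)
    _ ≤ C * ε ^ (-p) * M := by
        have hM : 0 ≤ M := (abs_nonneg _).trans hyM
        have hCε_nonneg : 0 ≤ C * ε ^ (-p) :=
          (norm_nonneg _).trans (hCε 0 (Metric.mem_closedBall_self hM))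
        gcongr
    _ = C * M * ε ^ (-p) := by ring

theorem ModerateNet.hasNetDerivBound_of_forall_le {u : ℝ → E → ℝ} (hu : ModerateNet u) {k : ℕ}
    {K : Set E} {p C ε₀ : ℝ} (hε₀ : 0 < ε₀)
    (hC : ∀ ε ∈ Ioc (0 : ℝ) 1, ε ≤ ε₀ → ∀ x ∈ K,
      ‖iteratedFDeriv ℝ k (u ε) x‖ ≤ C * ε ^ (-p)) :
    HasNetDerivBound u k K p :=
  .of_forall_Ioc (fun ε hε => (hu.1 ε hε).of_le (by exact_mod_cast le_top)) hε₀ hC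

theorem ModerateNet.hasNetDerivBound {u : ℝ → E → ℝ} (hu : ModerateNet u) {K : Set E}
    (hK : IsCompact K) (k : ℕ) : ∃ p, 0 ≤ p ∧ HasNetDerivBound u k K p := by
  obtain ⟨p, hp, C, -, ε₀, hε₀, hbound⟩ := hu.2 K hK k
  exact ⟨p, hp, hu.hasNetDerivBound_of_forall_le hε₀ hbound⟩

def charCoordSub : ℝ × ℝ →L[ℝ] ℝ := .fst ℝ ℝ ℝ - .snd ℝ ℝ ℝ

def charCoordAdd : ℝ × ℝ →L[ℝ] ℝ := .fst ℝ ℝ ℝ + .snd ℝ ℝ ℝ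

theorem charCoordSub_apply (q : ℝ × ℝ) : charCoordSub q = q.1 - q.2 := rfl

theorem charCoordAdd_apply (q : ℝ × ℝ) : charCoordAdd q = q.1 + q.2 := rfl

theorem exists_isCompact_mapsTo_charCoord {K : Set (ℝ × ℝ)} (hK : IsCompact K)
    (hKS : K ⊆ {q | |q.1| ≠ |q.2|}) :
    ∃ K' : Set ℝ, IsCompact K' ∧ K' ⊆ {y | y ≠ 0} ∧
      MapsTo charCoordSub K K' ∧ MapsTo charCoordAdd K K' := by
  refine ⟨charCoordSub '' K ∪ charCoordAdd '' K,
    (hK.image charCoordSub.continuous).union (hK.image charCoordAdd.continuous), ?_,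
    (mapsTo_image _ K).mono_right subset_union_left,
    (mapsTo_image _ K).mono_right subset_union_right⟩
  rintro _ (⟨q, hq, rfl⟩ | ⟨q, hq, rfl⟩) h0 <;> apply hKS hq
  · rw [show q.1 = q.2 from sub_eq_zero.1 h0]
  · rw [show q.1 = -q.2 from eq_neg_of_add_eq_zero_left h0, abs_neg]

theorem dAlembert_eq_charCoord {a b : ℝ → ℝ} (hb : Continuous b) (x t : ℝ) :
    ((1 / 2 : ℝ) • (a ∘ charCoordSub + a ∘ charCoordAdd +
      ((fun y => ∫ s in (0 : ℝ)..y, b s) ∘ charCoordAdd -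
        (fun y => ∫ s in (0 : ℝ)..y, b s) ∘ charCoordSub))) (x, t) =
      1 / 2 * (a (x - t) + a (x + t)) + 1 / 2 * ∫ y in (x - t)..(x + t), b y := by
  rw [← intervalIntegral.integral_interval_sub_left (hb.intervalIntegrable 0 (x + t))
    (hb.intervalIntegrable 0 (x - t))]
  simp only [Pi.smul_apply, Pi.add_apply, Pi.sub_apply, Function.comp_apply, smul_eq_mul,
    charCoordSub_apply, charCoordAdd_apply]
  ring

/-- Linear regularity: if the moderate initial data satisfy the `G^∞`-estimate
away from the origin, the d'Alembert solution of the linear wave equation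
satisfies the `G^∞`-estimate off the light-cone `S = {|x| = |t|}`. -/
theorem linear_GInf_regularity
    (a b : ℝ → ℝ → ℝ) (ha : ModerateNet a) (hb : ModerateNet b)
    (hGinf : ∀ K : Set ℝ, K ⊆ {x : ℝ | x ≠ 0} → IsCompact K →
      ∃ p : ℝ, 0 ≤ p ∧ ∀ k : ℕ, ∃ C : ℝ, 0 < C ∧ ∃ ε₀ : ℝ, 0 < ε₀ ∧
        ∀ ε ∈ Set.Ioc (0:ℝ) 1, ε ≤ ε₀ → ∀ x ∈ K,
          |iteratedDeriv k (a ε) x| ≤ C * ε ^ (-p) ∧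
          |iteratedDeriv k (b ε) x| ≤ C * ε ^ (-p))
    (v : ℝ → ℝ × ℝ → ℝ)
    (hvdef : ∀ ε ∈ Set.Ioc (0:ℝ) 1, ∀ x t : ℝ,
      v ε (x, t) = (1/2) * (a ε (x - t) + a ε (x + t))
        + (1/2) * ∫ y in (x - t)..(x + t), b ε y) :
    GInfEstimateOn {p : ℝ × ℝ | |p.1| ≠ |p.2|} v := by
  intro K hKS hKc
  obtain ⟨K', hK'c, hK'0, hσ, hτ⟩ := exists_isCompact_mapsTo_charCoord hKc hKS
  obtain ⟨p, hp, hab⟩ := hGinf K' hK'0 hK'c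
  obtain ⟨M, hM⟩ := hK'c.isBounded.subset_closedBall 0
  obtain ⟨p₀, -, hb₀⟩ := hb.hasNetDerivBound (isCompact_closedBall 0 M) 0
  refine ⟨max p p₀, le_max_of_le_left hp, fun k => ?_⟩
  have hab' (j : ℕ) : HasNetDerivBound a j K' p ∧ HasNetDerivBound b j K' p := by
    obtain ⟨C, -, ε₀, hε₀, h⟩ := hab j
    simp only [← Real.norm_eq_abs, ← norm_iteratedFDeriv_eq_norm_iteratedDeriv] at h
    exact ⟨ha.hasNetDerivBound_of_forall_le hε₀ fun ε hε hεε₀ x hx => (h ε hε hεε₀ x hx).1,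
      hb.hasNetDerivBound_of_forall_le hε₀ fun ε hε hεε₀ x hx => (h ε hε hεε₀ x hx).2⟩
  have hA := (hab' k).1.mono_exponent (le_max_left p p₀)
  have hB : HasNetDerivBound (fun ε y => ∫ s in (0 : ℝ)..y, b ε s) k K' (max p p₀) := by
    cases k with
    | zero => exact (hb₀.primitive_zero hM).mono_exponent (le_max_right p p₀)
    | succ j => exact (hab' j).2.primitive_succ.mono_exponent (le_max_left p p₀)
  refine ((((hA.comp_continuousLinearMap _ hσ).add (hA.comp_continuousLinearMap _ hτ)).add
    ((hB.comp_continuousLinearMap _ hτ).sub (hB.comp_continuousLinearMap _ hσ))).const_smul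
      (1 / 2)).congr ?_ |>.exists_pos_bound
  filter_upwards [Ioc_mem_nhdsGT one_pos] with ε hε
  ext ⟨x, t⟩
  rw [hvdef ε hε]
  exact dAlembert_eq_charCoord (hb.1 ε hε).continuous x t
end
end

section
/- Let φ ∈ S(ℝ) and set φ_ε(x) = ε^{−1}φ(x/ε). For ε ∈ (0,1] define u_ε(x,t) = ½∫_{x−t}^{x+t} φ_ε(y)² dy (the d'Alembert solution of the linear wave equation with data u(·,0) = 0, ∂_t u(·,0) = φ_ε²). Then for every (x,t) ∈ ℝ² with |x| < t, lim_{ε→0} ε·u_ε(x,t) = ½∫_ℝ φ(y)² dy. In particular, if φ is not identically zero, then for each such (x,t) the net ε ↦ u_ε(x,t) tends to +∞ as ε → 0. -/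
open Real Set Filter MeasureTheory Topology

noncomputable section

/-! Substituting `y = ε z` turns `ε · u_ε(x,t)` into `½∫_{(x-t)/ε}^{(x+t)/ε} φ²`; inside the
light-cone `x - t < 0 < x + t`, so these bounds run off to `∓∞` and the integral converges to
`½∫φ²`, which is positive unless `φ = 0`. -/

theorem mul_intervalIntegral_sq_inv_mul_comp_div (f : ℝ → ℝ) {ε : ℝ} (hε : ε ≠ 0) (a b : ℝ) :
    ε * ∫ y in a..b, (ε⁻¹ * f (y / ε)) ^ 2 = ∫ z in a / ε..b / ε, f z ^ 2 := by
  simp_rw [mul_pow]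
  rw [intervalIntegral.integral_const_mul,
    intervalIntegral.integral_comp_div (fun z => f z ^ 2) hε, smul_eq_mul]
  field_simp

theorem tendsto_intervalIntegral_div_nhdsGT_zero {E : Type*} [NormedAddCommGroup E]
    [NormedSpace ℝ E] {g : ℝ → E} (hg : Integrable g) {a b : ℝ} (ha : a < 0) (hb : 0 < b) :
    Tendsto (fun ε => ∫ z in a / ε..b / ε, g z) (𝓝[>] 0) (𝓝 (∫ z, g z)) := by
  have hbot : Tendsto (fun ε : ℝ => a / ε) (𝓝[>] 0) atBot := by
    simp only [div_eq_mul_inv]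
    exact (tendsto_const_mul_atBot_of_neg ha).mpr tendsto_inv_nhdsGT_zero
  have htop : Tendsto (fun ε : ℝ => b / ε) (𝓝[>] 0) atTop := by
    simp only [div_eq_mul_inv]
    exact tendsto_inv_nhdsGT_zero.const_mul_atTop hb
  exact intervalIntegral_tendsto_integral hg hbot htop

theorem tendsto_atTop_of_mul_tendsto_pos {v : ℝ → ℝ} {L : ℝ} (hL : 0 < L)
    (h : Tendsto (fun ε => ε * v ε) (𝓝[>] 0) (𝓝 L)) : Tendsto v (𝓝[>] 0) atTop := by
  refine (tendsto_inv_nhdsGT_zero.atTop_mul_pos hL h).congr' ?_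
  filter_upwards [self_mem_nhdsWithin] with ε (hε : 0 < ε)
  field_simp

theorem SchwartzMap.integral_sq_pos {E : Type*} [NormedAddCommGroup E] [NormedSpace ℝ E]
    [MeasurableSpace E] [BorelSpace E] (μ : Measure E) [μ.HasTemperateGrowth]
    [μ.IsOpenPosMeasure] {φ : SchwartzMap E ℝ} (hφ : φ ≠ 0) : 0 < ∫ y, φ y ^ 2 ∂μ := by
  obtain ⟨y, hy⟩ : ∃ y, φ y ≠ 0 := by
    by_contra! h
    exact hφ (SchwartzMap.ext h)
  exact integral_pos_of_integrable_nonneg_nonzero (φ.continuous.pow 2)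
    (φ.memLp 2 μ).integrable_sq (fun z => sq_nonneg (φ z)) (pow_ne_zero 2 hy)

/-- The d'Alembert solution with initial data `u(·,0) = 0`,
`∂_t u(·,0) = φ_ε²` (the square of the mollified Dirac measure), evaluated
inside the forward light-cone, blows up like `ε⁻¹ · ½∫φ²`. -/
theorem delta_squared_wave (φ : SchwartzMap ℝ ℝ)
    (u : ℝ → ℝ → ℝ → ℝ)
    (hu : ∀ ε : ℝ, ∀ x t : ℝ,
      u ε x t = (1/2) * ∫ y in (x - t)..(x + t), (ε⁻¹ * φ (y / ε)) ^ 2) :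
    (∀ x t : ℝ, |x| < t →
      Tendsto (fun ε => ε * u ε x t) (𝓝[>] (0:ℝ))
        (𝓝 ((1/2) * ∫ y : ℝ, (φ y) ^ 2))) ∧
    (φ ≠ 0 → ∀ x t : ℝ, |x| < t →
      Tendsto (fun ε => u ε x t) (𝓝[>] (0:ℝ)) atTop) := by
  have hlim : ∀ x t : ℝ, |x| < t →
      Tendsto (fun ε => ε * u ε x t) (𝓝[>] (0:ℝ)) (𝓝 ((1/2) * ∫ y : ℝ, (φ y) ^ 2)) := by
    intro x t hxt
    obtain ⟨hlt, hgt⟩ := abs_lt.mp hxt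
    refine ((tendsto_intervalIntegral_div_nhdsGT_zero (φ.memLp 2).integrable_sq
      (a := x - t) (b := x + t) (by linarith) (by linarith)).const_mul (1/2)).congr' ?_
    filter_upwards [self_mem_nhdsWithin] with ε (hε : 0 < ε)
    rw [hu, mul_left_comm, mul_intervalIntegral_sq_inv_mul_comp_div _ hε.ne']
  refine ⟨hlim, fun hφ x t hxt => tendsto_atTop_of_mul_tendsto_pos ?_ (hlim x t hxt)⟩
  have := SchwartzMap.integral_sq_pos volume hφ
  positivity
end
end

section
/- Let f : ℝ → ℝ be admissible. Let a, b ∈ C(ℝ) and h ∈ C(ℝ×[0,∞)), and let w ∈ C(ℝ×[0,∞)) satisfy the integral equation w(x,t) = ½(a(x−t) + a(x+t)) + ½∫_{x−t}^{x+t} b(y)dy + ½∫_0^t∫_{x−t+s}^{x+t−s} (f(w(y,s)) + h(y,s)) dy ds for all x ∈ ℝ, t ≥ 0. Let (a_ε), (b_ε) be smooth functions on ℝ converging to a, b locally uniformly on ℝ, and (h_ε) smooth functions on ℝ² converging to h locally uniformly on ℝ×[0,∞), and for each ε let u_ε ∈ C^∞(ℝ²) solve ∂_t²u_ε − ∂_x²u_ε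 = f(u_ε) + h_ε with u_ε(·,0) = a_ε, ∂_t u_ε(·,0) = b_ε. Then u_ε → w uniformly on every trapezoid K_T (κ > 0, 0 ≤ T ≤ κ) as ε → 0. -/
/-!
Integrating `∂ₜ²u - ∂ₓ²u` over the backward characteristic triangle of `(x, t)` (Fubini and the
fundamental theorem of calculus for the `∂ₜ²` term, the fundamental theorem of calculus along the
two characteristics for the rest) shows that a smooth solution of the wave equation satisfies
Duhamel's formula. So `u_ε` and `w` solve the same integral equation, with different data. The
triangle of a point of `K_T` stays in `K_T` and `f` is `L`-Lipschitz, so in the weighted norm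
`sup_{K_T} |·| e^{-(2κL+1)t}` the nonlinear term is a contraction with constant `1/2`, and the
difference of two solutions on `K_T` is bounded by a constant times the sup-distance of their data.
Locally uniform convergence of the data therefore gives uniform convergence on `K_T`.
-/

open Real Set Filter MeasureTheory Topology

noncomputable section

/-- An admissible nonlinearity: smooth, vanishing at 0, globally Lipschitz
(bounded first derivative), and all derivatives of at most polynomial growth. -/
def Admissible (f : ℝ → ℝ) : Prop :=
  ContDiff ℝ (⊤ : ℕ∞) f ∧ f 0 = 0 ∧ (∃ L : ℝ, ∀ y : ℝ, |deriv f y| ≤ L) ∧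
  ∀ k : ℕ, ∃ C : ℝ, 0 < C ∧ ∃ N : ℕ, ∀ y : ℝ, |iteratedDeriv k f y| ≤ C * (1 + |y|) ^ N

/-- The wave operator `∂_t² - ∂_x²` on functions of `(x,t) ∈ ℝ²`. -/
def waveOp (w : ℝ × ℝ → ℝ) (p : ℝ × ℝ) : ℝ :=
  iteratedDeriv 2 (fun s => w (p.1, s)) p.2 - iteratedDeriv 2 (fun y => w (y, p.2)) p.1

/-- The trapezoidal domain of dependence `K_T` over the base `[-κ,κ]`. -/
def KT (κ T : ℝ) : Set (ℝ × ℝ) :=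
  {p : ℝ × ℝ | 0 ≤ p.2 ∧ p.2 ≤ T ∧ |p.1| ≤ κ - p.2}

open scoped NNReal

def partialX (U : ℝ × ℝ → ℝ) (p : ℝ × ℝ) : ℝ := deriv (fun y => U (y, p.2)) p.1

def partialT (U : ℝ × ℝ → ℝ) (p : ℝ × ℝ) : ℝ := deriv (fun s => U (p.1, s)) p.2

theorem waveOp_eq_partialT_sub_partialX (U : ℝ × ℝ → ℝ) (p : ℝ × ℝ) :
    waveOp U p = partialT (partialT U) p - partialX (partialX U) p := by
  simp only [waveOp, iteratedDeriv_succ]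
  rfl

theorem fderiv_apply_eq_partialX_add_partialT {U : ℝ × ℝ → ℝ} {p : ℝ × ℝ}
    (hU : DifferentiableAt ℝ U p) (v : ℝ × ℝ) :
    fderiv ℝ U p v = v.1 * partialX U p + v.2 * partialT U p := by
  obtain ⟨x, t⟩ := p
  have hx : partialX U (x, t) = fderiv ℝ U (x, t) (1, 0) :=
    (hU.hasFDerivAt.comp_hasDerivAt x ((hasDerivAt_id x).prodMk (hasDerivAt_const x t))).deriv
  have ht : partialT U (x, t) = fderiv ℝ U (x, t) (0, 1) :=
    (hU.hasFDerivAt.comp_hasDerivAt t ((hasDerivAt_const t x).prodMk (hasDerivAt_id t))).deriv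
  have hv : v = v.1 • ((1 : ℝ), (0 : ℝ)) + v.2 • ((0 : ℝ), (1 : ℝ)) := by simp
  rw [hx, ht, hv, map_add, map_smul, map_smul]
  simp

theorem DifferentiableAt.hasDerivAt_comp_curve {U : ℝ × ℝ → ℝ} {γ : ℝ → ℝ × ℝ} {v : ℝ × ℝ}
    {s : ℝ} (hU : DifferentiableAt ℝ U (γ s)) (hγ : HasDerivAt γ v s) :
    HasDerivAt (fun s' => U (γ s')) (v.1 * partialX U (γ s) + v.2 * partialT U (γ s)) s := by
  rw [← fderiv_apply_eq_partialX_add_partialT hU]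
  exact hU.hasFDerivAt.comp_hasDerivAt s hγ

theorem hasDerivAt_partialX {U : ℝ × ℝ → ℝ} {y t : ℝ} (hU : DifferentiableAt ℝ U (y, t)) :
    HasDerivAt (fun y' => U (y', t)) (partialX U (y, t)) y :=
  (hU.comp y (differentiableAt_id.prodMk (differentiableAt_const t))).hasDerivAt

theorem hasDerivAt_partialT {U : ℝ × ℝ → ℝ} {y t : ℝ} (hU : DifferentiableAt ℝ U (y, t)) :
    HasDerivAt (fun t' => U (y, t')) (partialT U (y, t)) t :=
  (hU.comp t ((differentiableAt_const y).prodMk differentiableAt_id)).hasDerivAt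

theorem contDiff_partialX {U : ℝ × ℝ → ℝ} {n : WithTop ℕ∞} (hU : ContDiff ℝ (n + 1) U) :
    ContDiff ℝ n (partialX U) := by
  have h : partialX U = fun p => fderiv ℝ U p (1, 0) := funext fun p => by
    simp [fderiv_apply_eq_partialX_add_partialT (hU.differentiable (by simp) p)]
  rw [h]
  exact (hU.fderiv_right le_rfl).clm_apply contDiff_const

theorem contDiff_partialT {U : ℝ × ℝ → ℝ} {n : WithTop ℕ∞} (hU : ContDiff ℝ (n + 1) U) :
    ContDiff ℝ n (partialT U) := by
  have h : partialT U = fun p => fderiv ℝ U p (0, 1) := funext fun p => by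
    simp [fderiv_apply_eq_partialX_add_partialT (hU.differentiable (by simp) p)]
  rw [h]
  exact (hU.fderiv_right le_rfl).clm_apply contDiff_const

theorem continuous_intervalIntegral_of_continuous {g : ℝ × ℝ → ℝ} (hg : Continuous g)
    {α β : ℝ → ℝ} (hα : Continuous α) (hβ : Continuous β) :
    Continuous fun s => ∫ y in α s..β s, g (y, s) := by
  have h : ∀ s, ∫ y in α s..β s, g (y, s) =
      (∫ y in 0..β s, g (y, s)) - ∫ y in 0..α s, g (y, s) := fun s =>
    (intervalIntegral.integral_interval_sub_left
      (Continuous.intervalIntegrable (by fun_prop) _ _)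
      (Continuous.intervalIntegrable (by fun_prop) _ _)).symm
  simp_rw [h]
  fun_prop

theorem continuous_partialX {U : ℝ × ℝ → ℝ} (hU : ContDiff ℝ 1 U) : Continuous (partialX U) :=
  (contDiff_partialX (n := 0) (by simpa using hU)).continuous

theorem continuous_partialT {U : ℝ × ℝ → ℝ} (hU : ContDiff ℝ 1 U) : Continuous (partialT U) :=
  (contDiff_partialT (n := 0) (by simpa using hU)).continuous

def triangleIntegral (g : ℝ × ℝ → ℝ) (x t : ℝ) : ℝ :=
  ∫ s in (0 : ℝ)..t, ∫ y in (x - t + s)..(x + t - s), g (y, s)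

theorem intervalIntegral_eq_integral_indicator_Icc (f : ℝ → ℝ) {a b : ℝ} (hab : a ≤ b) :
    ∫ x in a..b, f x = ∫ x, (Icc a b).indicator f x := by
  rw [intervalIntegral.integral_of_le hab, ← integral_Icc_eq_integral_Ioc,
    integral_indicator measurableSet_Icc]

theorem triangleIntegral_eq_integral_swap {g : ℝ × ℝ → ℝ} (hg : Continuous g) (x : ℝ) {t : ℝ}
    (ht : 0 ≤ t) :
    triangleIntegral g x t =
      ∫ y in (x - t)..(x + t), ∫ s in (0 : ℝ)..min (y - (x - t)) (x + t - y), g (y, s) := by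
  set S : Set (ℝ × ℝ) := {q | q.1 ∈ Icc 0 t ∧ q.2 ∈ Icc (x - t + q.1) (x + t - q.1)}
  have hS : ∀ s y, (s, y) ∈ S ↔
      y ∈ Icc (x - t) (x + t) ∧ s ∈ Icc 0 (min (y - (x - t)) (x + t - y)) := by
    intro s y
    simp only [S, mem_ofPred_eq, mem_Icc, le_min_iff]
    constructor
    · rintro ⟨⟨h0, -⟩, h1, h2⟩
      exact ⟨⟨by linarith, by linarith⟩, h0, by linarith, by linarith⟩
    · rintro ⟨-, h0, h1, h2⟩
      exact ⟨⟨h0, by linarith⟩, by linarith, by linarith⟩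
  set G : ℝ × ℝ → ℝ := fun q => g (q.2, q.1)
  have hSclosed : IsClosed S :=
    ((isClosed_le continuous_const continuous_fst).inter
      (isClosed_le continuous_fst continuous_const)).inter
    ((isClosed_le (by fun_prop) continuous_snd).inter (isClosed_le continuous_snd (by fun_prop)))
  have hScompact : IsCompact S :=
    (isCompact_Icc.prod (isCompact_Icc (a := x - t) (b := x + t))).of_isClosed_subset hSclosed
      fun q hq => ⟨hq.1, (hS q.1 q.2).1 hq |>.1⟩
  have hint : Integrable (S.indicator G) (volume.prod volume) := by
    rw [← Measure.volume_eq_prod, integrable_indicator_iff hSclosed.measurableSet]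
    exact (hg.comp continuous_swap).continuousOn.integrableOn_compact hScompact
  calc triangleIntegral g x t = ∫ s, ∫ y, S.indicator G (s, y) := by
        rw [triangleIntegral, intervalIntegral_eq_integral_indicator_Icc _ ht]
        congr 1 with s
        by_cases hs : s ∈ Icc 0 t
        · rw [indicator_of_mem hs,
            intervalIntegral_eq_integral_indicator_Icc _ (by linarith [hs.2])]
          simp only [indicator_apply, S, mem_ofPred_eq, hs, true_and, G]
        · simp only [indicator_apply, S, mem_ofPred_eq, hs, false_and, if_false, integral_zero]
    _ = ∫ y, ∫ s, S.indicator G (s, y) := integral_integral_swap hint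
    _ = _ := by
        rw [intervalIntegral_eq_integral_indicator_Icc _ (by linarith)]
        congr 1 with y
        by_cases hy : y ∈ Icc (x - t) (x + t)
        · rw [indicator_of_mem hy,
            intervalIntegral_eq_integral_indicator_Icc _
              (le_min (by linarith [hy.1]) (by linarith [hy.2]))]
          simp only [indicator_apply, hS, hy, true_and, G]
        · simp only [indicator_apply, hS, hy, false_and, if_false, integral_zero]

theorem integral_comp_min_eq {φ : ℝ × ℝ → ℝ} (hφ : Continuous φ) (x : ℝ) {t : ℝ} (ht : 0 ≤ t) :
    ∫ y in (x - t)..(x + t), φ (y, min (y - (x - t)) (x + t - y)) =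
      ∫ s in (0 : ℝ)..t, (φ (x - t + s, s) + φ (x + t - s, s)) := by
  have hint : ∀ a b,
      IntervalIntegrable (fun y => φ (y, min (y - (x - t)) (x + t - y))) volume a b :=
    Continuous.intervalIntegrable (by fun_prop)
  have hleft : ∫ y in (x - t)..x, φ (y, min (y - (x - t)) (x + t - y)) =
      ∫ s in (0 : ℝ)..t, φ (x - t + s, s) := by
    rw [intervalIntegral.integral_congr (g := fun y => φ (y, y - (x - t))) fun y hy => by
      rw [uIcc_of_le (by linarith)] at hy
      simp only [min_eq_left (show y - (x - t) ≤ x + t - y by linarith [hy.2])]]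
    simpa [add_comm] using (intervalIntegral.integral_comp_add_right
      (fun y => φ (y, y - (x - t))) (x - t) (a := 0) (b := t)).symm
  have hright : ∫ y in x..(x + t), φ (y, min (y - (x - t)) (x + t - y)) =
      ∫ s in (0 : ℝ)..t, φ (x + t - s, s) := by
    rw [intervalIntegral.integral_congr (g := fun y => φ (y, x + t - y)) fun y hy => by
      rw [uIcc_of_le (by linarith)] at hy
      simp only [min_eq_right (show x + t - y ≤ y - (x - t) by linarith [hy.1])]]
    simpa using (intervalIntegral.integral_comp_sub_left
      (fun y => φ (y, x + t - y)) (x + t) (a := 0) (b := t)).symm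
  rw [← intervalIntegral.integral_add_adjacent_intervals (hint _ x) (hint x _), hleft, hright,
    intervalIntegral.integral_add (Continuous.intervalIntegrable (by fun_prop) _ _)
      (Continuous.intervalIntegrable (by fun_prop) _ _)]

theorem triangleIntegral_partialT {V : ℝ × ℝ → ℝ} (hV : ContDiff ℝ 1 V) (x : ℝ) {t : ℝ}
    (ht : 0 ≤ t) :
    triangleIntegral (partialT V) x t =
      (∫ s in (0 : ℝ)..t, (V (x - t + s, s) + V (x + t - s, s)))
        - ∫ y in (x - t)..(x + t), V (y, 0) := by
  have hVc := hV.continuous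
  have hVt := continuous_partialT hV
  have hftc : ∀ y, ∫ s in (0 : ℝ)..min (y - (x - t)) (x + t - y), partialT V (y, s) =
      V (y, min (y - (x - t)) (x + t - y)) - V (y, 0) := fun y =>
    intervalIntegral.integral_eq_sub_of_hasDerivAt
      (fun s _ => hasDerivAt_partialT (hV.differentiable one_ne_zero _))
      (Continuous.intervalIntegrable (by fun_prop) _ _)
  rw [triangleIntegral_eq_integral_swap hVt x ht]
  simp_rw [hftc]
  rw [intervalIntegral.integral_sub (Continuous.intervalIntegrable (by fun_prop) _ _)
    (Continuous.intervalIntegrable (by fun_prop) _ _), integral_comp_min_eq hVc x ht]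

theorem triangleIntegral_partialX {Φ : ℝ × ℝ → ℝ} (hΦ : ContDiff ℝ 1 Φ) (x t : ℝ) :
    triangleIntegral (partialX Φ) x t =
      ∫ s in (0 : ℝ)..t, (Φ (x + t - s, s) - Φ (x - t + s, s)) := by
  have hΦx := continuous_partialX hΦ
  refine intervalIntegral.integral_congr fun s _ => ?_
  exact intervalIntegral.integral_eq_sub_of_hasDerivAt
    (fun y _ => hasDerivAt_partialX (hΦ.differentiable one_ne_zero _))
    (Continuous.intervalIntegrable (by fun_prop) _ _)

theorem triangleIntegral_sub {g₁ g₂ : ℝ × ℝ → ℝ} (hg₁ : Continuous g₁) (hg₂ : Continuous g₂)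
    (x t : ℝ) :
    triangleIntegral (fun q => g₁ q - g₂ q) x t =
      triangleIntegral g₁ x t - triangleIntegral g₂ x t := by
  have hF₁ := continuous_intervalIntegral_of_continuous hg₁
    (by fun_prop : Continuous fun s => x - t + s) (by fun_prop : Continuous fun s => x + t - s)
  have hF₂ := continuous_intervalIntegral_of_continuous hg₂
    (by fun_prop : Continuous fun s => x - t + s) (by fun_prop : Continuous fun s => x + t - s)
  unfold triangleIntegral
  rw [← intervalIntegral.integral_sub (hF₁.intervalIntegrable _ _) (hF₂.intervalIntegrable _ _)]
  refine intervalIntegral.integral_congr fun s _ => ?_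
  exact intervalIntegral.integral_sub (Continuous.intervalIntegrable (by fun_prop) _ _)
    (Continuous.intervalIntegrable (by fun_prop) _ _)

theorem integral_along_characteristics {U : ℝ × ℝ → ℝ} (hU : ContDiff ℝ 1 U) (x t : ℝ) :
    ∫ s in (0 : ℝ)..t, ((partialX U (x - t + s, s) + partialT U (x - t + s, s))
        + (partialT U (x + t - s, s) - partialX U (x + t - s, s))) =
      2 * U (x, t) - (U (x - t, 0) + U (x + t, 0)) := by
  have hUx := continuous_partialX hU
  have hUt := continuous_partialT hU
  have hderiv : ∀ s ∈ uIcc (0 : ℝ) t, HasDerivAt (fun s => U (x - t + s, s) + U (x + t - s, s))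
      ((partialX U (x - t + s, s) + partialT U (x - t + s, s))
        + (partialT U (x + t - s, s) - partialX U (x + t - s, s))) s := by
    intro s _
    have h₁ := (hU.differentiable one_ne_zero _).hasDerivAt_comp_curve
      (((hasDerivAt_id s).const_add (x - t)).prodMk (hasDerivAt_id s))
    have h₂ := (hU.differentiable one_ne_zero _).hasDerivAt_comp_curve
      (((hasDerivAt_id s).const_sub (x + t)).prodMk (hasDerivAt_id s))
    refine (h₁.add h₂).congr_deriv ?_
    dsimp only [id]
    ring
  rw [intervalIntegral.integral_eq_sub_of_hasDerivAt hderiv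
    (Continuous.intervalIntegrable (by fun_prop) _ _)]
  simp only [add_zero, sub_zero, sub_add_cancel, add_sub_cancel_right]
  ring

theorem duhamel_formula {U : ℝ × ℝ → ℝ} (hU : ContDiff ℝ 2 U) (x : ℝ) {t : ℝ} (ht : 0 ≤ t) :
    U (x, t) = (1/2) * (U (x - t, 0) + U (x + t, 0))
      + (1/2) * (∫ y in (x - t)..(x + t), partialT U (y, 0))
      + (1/2) * triangleIntegral (waveOp U) x t := by
  have hUx : ContDiff ℝ 1 (partialX U) := contDiff_partialX hU
  have hUt : ContDiff ℝ 1 (partialT U) := contDiff_partialT hU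
  have hU₁ : ContDiff ℝ 1 U := hU.of_le (by norm_num)
  have hUxc := hUx.continuous
  have hUtc := hUt.continuous
  have hwave : triangleIntegral (waveOp U) x t =
      triangleIntegral (partialT (partialT U)) x t
        - triangleIntegral (partialX (partialX U)) x t := by
    simp_rw [funext (waveOp_eq_partialT_sub_partialX U)]
    exact triangleIntegral_sub (continuous_partialT hUt) (continuous_partialX hUx) x t
  have hboundary : (∫ s in (0 : ℝ)..t, (partialT U (x - t + s, s) + partialT U (x + t - s, s)))
      - ∫ s in (0 : ℝ)..t, (partialX U (x + t - s, s) - partialX U (x - t + s, s)) =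
      2 * U (x, t) - (U (x - t, 0) + U (x + t, 0)) := by
    rw [← integral_along_characteristics hU₁ x t, ← intervalIntegral.integral_sub
      (Continuous.intervalIntegrable (by fun_prop) _ _)
      (Continuous.intervalIntegrable (by fun_prop) _ _)]
    congr 1 with s
    ring
  rw [hwave, triangleIntegral_partialT hUt x ht, triangleIntegral_partialX hUx]
  linarith

theorem abs_sub_intervalIntegral_le {g₁ g₂ : ℝ → ℝ} (hg₁ : Continuous g₁) (hg₂ : Continuous g₂)
    {a b δ : ℝ} (hab : a ≤ b) (hle : ∀ y ∈ Icc a b, |g₁ y - g₂ y| ≤ δ) :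
    |(∫ y in a..b, g₁ y) - ∫ y in a..b, g₂ y| ≤ δ * (b - a) := by
  rw [← intervalIntegral.integral_sub (hg₁.intervalIntegrable _ _) (hg₂.intervalIntegrable _ _),
    ← abs_of_nonneg (sub_nonneg.2 hab)]
  refine intervalIntegral.norm_integral_le_of_norm_le_const (f := fun y => g₁ y - g₂ y)
    fun y hy => ?_
  rw [uIoc_of_le hab] at hy
  exact hle y (Ioc_subset_Icc_self hy)

theorem abs_sub_triangleIntegral_le {g₁ g₂ : ℝ × ℝ → ℝ} (hg₁ : Continuous g₁)
    (hg₂ : Continuous g₂) {φ : ℝ → ℝ} (hφ : Continuous φ) (x : ℝ) {t : ℝ} (ht : 0 ≤ t)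
    (hle : ∀ s ∈ Icc 0 t, ∀ y ∈ Icc (x - t + s) (x + t - s), |g₁ (y, s) - g₂ (y, s)| ≤ φ s) :
    |triangleIntegral g₁ x t - triangleIntegral g₂ x t| ≤ 2 * t * ∫ s in (0 : ℝ)..t, φ s := by
  have hF₁ := continuous_intervalIntegral_of_continuous hg₁
    (by fun_prop : Continuous fun s => x - t + s) (by fun_prop : Continuous fun s => x + t - s)
  have hF₂ := continuous_intervalIntegral_of_continuous hg₂
    (by fun_prop : Continuous fun s => x - t + s) (by fun_prop : Continuous fun s => x + t - s)
  unfold triangleIntegral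
  rw [← intervalIntegral.integral_sub (hF₁.intervalIntegrable _ _) (hF₂.intervalIntegrable _ _),
    ← intervalIntegral.integral_const_mul]
  refine (intervalIntegral.abs_integral_le_integral_abs ht).trans <|
    intervalIntegral.integral_mono_on ht ((hF₁.sub hF₂).abs.intervalIntegrable _ _)
      (Continuous.intervalIntegrable (by fun_prop) _ _) fun s hs => ?_
  have hφ₀ : 0 ≤ φ s := (abs_nonneg _).trans (hle s hs x ⟨by linarith [hs.2], by linarith [hs.2]⟩)
  calc |(∫ y in (x - t + s)..(x + t - s), g₁ (y, s)) - ∫ y in (x - t + s)..(x + t - s), g₂ (y, s)|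
      ≤ φ s * (x + t - s - (x - t + s)) :=
        abs_sub_intervalIntegral_le (by fun_prop) (by fun_prop) (by linarith [hs.2]) (hle s hs)
    _ ≤ 2 * t * φ s := by nlinarith [hs.1]

theorem integral_exp_mul_eq {c : ℝ} (hc : c ≠ 0) (t : ℝ) :
    ∫ s in (0 : ℝ)..t, exp (c * s) = (exp (c * t) - 1) / c := by
  rw [intervalIntegral.integral_comp_mul_left _ hc, integral_exp, mul_zero, exp_zero,
    smul_eq_mul, inv_mul_eq_div]

theorem isCompact_KT (κ T : ℝ) : IsCompact (KT κ T) := by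
  have hclosed : IsClosed (KT κ T) := by
    simp only [KT, ofPred_and]
    exact (isClosed_le continuous_const continuous_snd).inter
      ((isClosed_le continuous_snd continuous_const).inter
      (isClosed_le (by fun_prop : Continuous fun p : ℝ × ℝ => |p.1|)
        (by fun_prop : Continuous fun p : ℝ × ℝ => κ - p.2)))
  refine ((isCompact_Icc (a := -κ) (b := κ)).prod
    (isCompact_Icc (a := 0) (b := T))).of_isClosed_subset hclosed fun p ⟨h0, hT, hx⟩ => ?_
  rw [abs_le] at hx
  exact ⟨⟨by linarith [hx.1], by linarith [hx.2]⟩, h0, hT⟩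

theorem mem_KT_of_mem_triangle {κ T x t s y : ℝ} (hp : (x, t) ∈ KT κ T) (hs : s ∈ Icc 0 t)
    (hy : y ∈ Icc (x - t + s) (x + t - s)) : (y, s) ∈ KT κ T := by
  obtain ⟨-, htT, hx⟩ := hp
  refine ⟨hs.1, hs.2.trans htT, abs_le.2 ⟨?_, ?_⟩⟩ <;>
    linarith [abs_le.1 hx, hy.1, hy.2]

theorem Icc_subset_Icc_of_mem_KT {κ T x t : ℝ} (hp : (x, t) ∈ KT κ T) :
    Icc (x - t) (x + t) ⊆ Icc (-κ) κ := fun y hy => by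
  have := abs_le.1 (mem_KT_of_mem_triangle hp ⟨le_rfl, hp.1⟩ (by simpa using hy)).2.2
  exact ⟨by linarith, by linarith⟩

def IsDuhamelSolution (f : ℝ → ℝ) (a b : ℝ → ℝ) (h w : ℝ × ℝ → ℝ) : Prop :=
  ∀ x t : ℝ, 0 ≤ t → w (x, t) = (1/2) * (a (x - t) + a (x + t))
    + (1/2) * (∫ y in (x - t)..(x + t), b y)
    + (1/2) * triangleIntegral (fun q => f (w q) + h q) x t

theorem IsDuhamelSolution.congr {f a b : ℝ → ℝ} {h w H W : ℝ × ℝ → ℝ}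
    (hw : IsDuhamelSolution f a b h w) (hW : EqOn W w {p | 0 ≤ p.2})
    (hH : EqOn H h {p | 0 ≤ p.2}) : IsDuhamelSolution f a b H W := by
  intro x t ht
  rw [hW (show 0 ≤ (x, t).2 from ht), hw x t ht]
  congr 2
  refine intervalIntegral.integral_congr fun s hs => intervalIntegral.integral_congr fun y _ => ?_
  have hs₀ : 0 ≤ (y, s).2 := by rw [uIcc_of_le ht] at hs; exact hs.1
  simp only [hW hs₀, hH hs₀]

theorem isDuhamelSolution_of_waveOp_eq {f : ℝ → ℝ} {H U : ℝ × ℝ → ℝ} (hU : ContDiff ℝ 2 U)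
    (hpde : ∀ p, waveOp U p = f (U p) + H p) :
    IsDuhamelSolution f (fun x => U (x, 0)) (fun x => partialT U (x, 0)) H U := fun x _ ht => by
  simpa only [funext hpde] using duhamel_formula hU x ht

theorem le_div_one_sub_of_forall_le_add_mul {X : Type*} {S : Set X} {g : X → ℝ}
    (hbdd : BddAbove (g '' S)) {A θ : ℝ} (hθ : θ < 1)
    (h : ∀ M, (∀ q ∈ S, g q ≤ M) → ∀ q ∈ S, g q ≤ A + θ * M) :
    ∀ p ∈ S, g p ≤ A / (1 - θ) := by
  intro p hp
  have hsup : ∀ q ∈ S, g q ≤ sSup (g '' S) := fun q hq => le_csSup hbdd (mem_image_of_mem g hq)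
  have hself : sSup (g '' S) ≤ A + θ * sSup (g '' S) :=
    csSup_le ⟨g p, mem_image_of_mem g hp⟩ (by rintro _ ⟨q, hq, rfl⟩; exact h _ hsup q hq)
  rw [le_div_iff₀ (by linarith)]
  nlinarith [hsup p hp]

theorem abs_sub_triangleIntegral_lipschitz_le {f : ℝ → ℝ} {K : ℝ≥0} (hf : LipschitzWith K f)
    {HU HW U W : ℝ × ℝ → ℝ} (hUc : Continuous U) (hWc : Continuous W) (hHUc : Continuous HU)
    (hHWc : Continuous HW) {κ T δh x t : ℝ} (hp : (x, t) ∈ KT κ T)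
    (hδh : ∀ p ∈ KT κ T, |HU p - HW p| ≤ δh) {c M : ℝ} (hc : c ≠ 0)
    (hM : ∀ q ∈ KT κ T, |U q - W q| ≤ M * exp (c * q.2)) :
    |triangleIntegral (fun q => f (U q) + HU q) x t
        - triangleIntegral (fun q => f (W q) + HW q) x t|
      ≤ 2 * t * (K * (M * ((exp (c * t) - 1) / c)) + t * δh) := by
  have hfc : Continuous f := hf.continuous
  have hbound := abs_sub_triangleIntegral_le (g₁ := fun q => f (U q) + HU q)
    (g₂ := fun q => f (W q) + HW q) (φ := fun s => K * (M * exp (c * s)) + δh)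
    (by fun_prop) (by fun_prop) (by fun_prop) x hp.1 fun s hs y hy => by
      have hq := mem_KT_of_mem_triangle hp hs hy
      calc |f (U (y, s)) + HU (y, s) - (f (W (y, s)) + HW (y, s))|
          = |(f (U (y, s)) - f (W (y, s))) + (HU (y, s) - HW (y, s))| := by ring_nf
        _ ≤ |f (U (y, s)) - f (W (y, s))| + |HU (y, s) - HW (y, s)| := abs_add_le _ _
        _ ≤ K * |U (y, s) - W (y, s)| + δh := by
            gcongr
            · simpa only [Real.dist_eq] using hf.dist_le_mul (U (y, s)) (W (y, s))
            · exact hδh _ hq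
        _ ≤ K * (M * exp (c * s)) + δh := by
            gcongr
            exact hM _ hq
  rwa [intervalIntegral.integral_add (Continuous.intervalIntegrable (by fun_prop) _ _)
    intervalIntegrable_const, intervalIntegral.integral_const_mul,
    intervalIntegral.integral_const_mul, integral_exp_mul_eq hc,
    intervalIntegral.integral_const, smul_eq_mul, sub_zero] at hbound

theorem abs_sub_le_of_isDuhamelSolution_of_le_exp {f : ℝ → ℝ} {K : ℝ≥0} (hf : LipschitzWith K f)
    {aU aW bU bW : ℝ → ℝ} {HU HW U W : ℝ × ℝ → ℝ}
    (hU : IsDuhamelSolution f aU bU HU U) (hW : IsDuhamelSolution f aW bW HW W)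
    (hUc : Continuous U) (hWc : Continuous W) (hHUc : Continuous HU) (hHWc : Continuous HW)
    (hbUc : Continuous bU) (hbWc : Continuous bW) {κ T δa δb δh : ℝ} (hTκ : T ≤ κ)
    (hδa : ∀ x ∈ Icc (-κ) κ, |aU x - aW x| ≤ δa) (hδb : ∀ x ∈ Icc (-κ) κ, |bU x - bW x| ≤ δb)
    (hδh : ∀ p ∈ KT κ T, |HU p - HW p| ≤ δh) {c M : ℝ} (hc : 0 < c)
    (hM : ∀ q ∈ KT κ T, |U q - W q| ≤ M * exp (c * q.2)) {p : ℝ × ℝ} (hp : p ∈ KT κ T) :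
    |U p - W p| ≤ δa + κ * δb + κ ^ 2 * δh + κ * K / c * M * exp (c * p.2) := by
  obtain ⟨x, t⟩ := p
  have ht₀ : 0 ≤ t := hp.1
  have htκ : t ≤ κ := hp.2.1.trans hTκ
  have hκ : 0 ≤ κ := ht₀.trans htκ
  have hbase := Icc_subset_Icc_of_mem_KT hp
  have hM₀ : 0 ≤ M :=
    nonneg_of_mul_nonneg_left ((abs_nonneg _).trans (hM _ hp)) (exp_pos _)
  have hδb₀ : 0 ≤ δb := (abs_nonneg _).trans (hδb x (hbase ⟨by linarith, by linarith⟩))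
  have hδh₀ : 0 ≤ δh := (abs_nonneg _).trans (hδh _ hp)
  have hexp : 1 ≤ exp (c * t) := one_le_exp (by positivity)
  have ha₁ := abs_le.1 (hδa _ (hbase ⟨le_rfl, by linarith⟩))
  have ha₂ := abs_le.1 (hδa _ (hbase ⟨by linarith, le_rfl⟩))
  have hb := abs_sub_intervalIntegral_le hbUc hbWc (by linarith) fun y hy => hδb y (hbase hy)
  have hh := abs_sub_triangleIntegral_lipschitz_le hf hUc hWc hHUc hHWc hp hδh hc.ne' hM
  have hA : |aU (x - t) + aU (x + t) - (aW (x - t) + aW (x + t))| ≤ 2 * δa :=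
    abs_le.2 ⟨by linarith [ha₁.1, ha₂.1], by linarith [ha₁.2, ha₂.2]⟩
  have hKM : t * (K * (M * ((exp (c * t) - 1) / c))) ≤ κ * K / c * M * exp (c * t) :=
    calc t * (K * (M * ((exp (c * t) - 1) / c))) = t * (K * M / c) * (exp (c * t) - 1) := by ring
      _ ≤ κ * (K * M / c) * exp (c * t) := by
          gcongr
          exact sub_le_self _ zero_le_one
      _ = κ * K / c * M * exp (c * t) := by ring
  have htt : t * (t * δh) ≤ κ ^ 2 * δh := by rw [← mul_assoc, sq]; gcongr
  have hsplit : ∀ a₁ a₂ b₁ b₂ c₁ c₂ : ℝ,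
      |1/2 * a₁ + 1/2 * b₁ + 1/2 * c₁ - (1/2 * a₂ + 1/2 * b₂ + 1/2 * c₂)| ≤
        (|a₁ - a₂| + |b₁ - b₂| + |c₁ - c₂|) / 2 := fun a₁ a₂ b₁ b₂ c₁ c₂ => by
    rw [show 1/2 * a₁ + 1/2 * b₁ + 1/2 * c₁ - (1/2 * a₂ + 1/2 * b₂ + 1/2 * c₂) =
      ((a₁ - a₂) + (b₁ - b₂) + (c₁ - c₂)) / 2 by ring, abs_div, abs_two]
    gcongr
    exact abs_add_three _ _ _
  rw [hU x t ht₀, hW x t ht₀]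
  refine (hsplit _ _ _ _ _ _).trans ?_
  nlinarith [mul_le_mul_of_nonneg_left htκ hδb₀]

theorem abs_sub_le_of_isDuhamelSolution {f : ℝ → ℝ} {K : ℝ≥0} (hf : LipschitzWith K f)
    {aU aW bU bW : ℝ → ℝ} {HU HW U W : ℝ × ℝ → ℝ}
    (hU : IsDuhamelSolution f aU bU HU U) (hW : IsDuhamelSolution f aW bW HW W)
    (hUc : Continuous U) (hWc : Continuous W) (hHUc : Continuous HU) (hHWc : Continuous HW)
    (hbUc : Continuous bU) (hbWc : Continuous bW) {κ T δa δb δh : ℝ} (hTκ : T ≤ κ)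
    (hδa : ∀ x ∈ Icc (-κ) κ, |aU x - aW x| ≤ δa) (hδb : ∀ x ∈ Icc (-κ) κ, |bU x - bW x| ≤ δb)
    (hδh : ∀ p ∈ KT κ T, |HU p - HW p| ≤ δh) :
    ∀ p ∈ KT κ T, |U p - W p| ≤ 2 * (δa + κ * δb + κ ^ 2 * δh) * exp ((2 * κ * K + 1) * κ) := by
  set c := 2 * κ * K + 1
  set A := δa + κ * δb + κ ^ 2 * δh
  have hA₀ : ∀ p ∈ KT κ T, 0 ≤ A ∧ 0 < c := fun p hp => by
    have hκ : 0 ≤ κ := hp.1.trans (hp.2.1.trans hTκ)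
    have hx : p.1 ∈ Icc (-κ) κ :=
      Icc_subset_Icc_of_mem_KT hp ⟨by linarith [hp.1], by linarith [hp.1]⟩
    have := (abs_nonneg _).trans (hδa _ hx)
    have := (abs_nonneg _).trans (hδb _ hx)
    have := (abs_nonneg _).trans (hδh _ hp)
    exact ⟨by positivity, by positivity⟩
  -- Weighted by `exp (-c t)`, the integral inequality becomes a contraction with constant `1/2`.
  have hweighted : ∀ p ∈ KT κ T, |U p - W p| * exp (-(c * p.2)) ≤ A / (1 - 1/2) := by
    refine le_div_one_sub_of_forall_le_add_mul ((isCompact_KT κ T).bddAbove_image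
      (by fun_prop)) (by norm_num) fun M hM p hp => ?_
    obtain ⟨hA, hc⟩ := hA₀ p hp
    have hM₀ : 0 ≤ M := (mul_nonneg (abs_nonneg _) (exp_pos _).le).trans (hM p hp)
    have hM' : ∀ q ∈ KT κ T, |U q - W q| ≤ M * exp (c * q.2) := fun q hq => by
      simpa [mul_assoc, ← exp_add] using mul_le_mul_of_nonneg_right (hM q hq) (exp_pos (c * q.2)).le
    have hest := abs_sub_le_of_isDuhamelSolution_of_le_exp hf hU hW hUc hWc hHUc hHWc hbUc hbWc
      hTκ hδa hδb hδh hc hM' hp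
    have hsmall : κ * K / c ≤ 1/2 := by rw [div_le_iff₀ hc]; linarith
    have hdecay : exp (-(c * p.2)) ≤ 1 := exp_le_one_iff.2 (by nlinarith [hp.1])
    calc |U p - W p| * exp (-(c * p.2))
        ≤ (A + κ * K / c * M * exp (c * p.2)) * exp (-(c * p.2)) := by gcongr
      _ = A * exp (-(c * p.2)) + κ * K / c * M := by
          rw [add_mul, mul_assoc _ (exp _), ← exp_add, add_neg_cancel, exp_zero, mul_one]
      _ ≤ A * 1 + 1/2 * M := by gcongr
      _ = A + 1/2 * M := by ring
  intro p hp
  obtain ⟨hA, hc⟩ := hA₀ p hp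
  calc |U p - W p| = |U p - W p| * exp (-(c * p.2)) * exp (c * p.2) := by
        rw [mul_assoc, ← exp_add, neg_add_cancel, exp_zero, mul_one]
    _ ≤ A / (1 - 1/2) * exp (c * κ) := by
        gcongr
        · exact hweighted p hp
        · exact hp.2.1.trans hTκ
    _ = 2 * A * exp (c * κ) := by ring

theorem tendstoUniformlyOn_KT_of_isDuhamelSolution {ι : Type*} {l : Filter ι} {f : ℝ → ℝ}
    {K : ℝ≥0} (hf : LipschitzWith K f) {a b : ℝ → ℝ} {H W : ℝ × ℝ → ℝ}
    (hW : IsDuhamelSolution f a b H W) (hWc : Continuous W) (hHc : Continuous H)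
    (hbc : Continuous b) {aN bN : ι → ℝ → ℝ} {HN U : ι → ℝ × ℝ → ℝ}
    (hU : ∀ᶠ i in l, IsDuhamelSolution f (aN i) (bN i) (HN i) (U i) ∧ Continuous (U i) ∧
      Continuous (HN i) ∧ Continuous (bN i))
    {κ T : ℝ} (hTκ : T ≤ κ) (ha : TendstoUniformlyOn aN a l (Icc (-κ) κ))
    (hb : TendstoUniformlyOn bN b l (Icc (-κ) κ)) (hH : TendstoUniformlyOn HN H l (KT κ T)) :
    TendstoUniformlyOn U W l (KT κ T) := by
  rw [Metric.tendstoUniformlyOn_iff] at ha hb hH ⊢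
  intro δ hδ
  set C := 2 * (1 + κ + κ ^ 2) * exp ((2 * κ * K + 1) * κ)
  have hC : 0 < C := by
    have : 0 < 1 + κ + κ ^ 2 := by nlinarith [sq_nonneg (κ + 1/2)]
    positivity
  have hη : 0 < δ / (2 * C) := by positivity
  have hclose {u v : ℝ} (h : dist v u < δ / (2 * C)) : |u - v| ≤ δ / (2 * C) := by
    rw [← Real.dist_eq, dist_comm]
    exact h.le
  filter_upwards [ha _ hη, hb _ hη, hH _ hη, hU] with i hai hbi hHi ⟨hUi, hUic, hHic, hbic⟩ p hp
  have hest := abs_sub_le_of_isDuhamelSolution hf hUi hW hUic hWc hHic hHc hbic hbc hTκ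
    (fun x hx => hclose (hai x hx)) (fun x hx => hclose (hbi x hx))
    (fun q hq => hclose (hHi q hq)) p hp
  rw [dist_comm, Real.dist_eq]
  calc |U i p - W p| ≤ C * (δ / (2 * C)) := by linarith
    _ = δ / 2 := by field_simp
    _ < δ := by linarith

theorem Admissible.exists_lipschitzWith {f : ℝ → ℝ} (hf : Admissible f) :
    ∃ K : ℝ≥0, LipschitzWith K f := by
  obtain ⟨L, hL⟩ := hf.2.2.1
  refine ⟨L.toNNReal, lipschitzWith_of_nnnorm_deriv_le (hf.1.differentiable (by simp)) fun y => ?_⟩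
  rw [← NNReal.coe_le_coe, coe_nnnorm, Real.coe_toNNReal']
  exact (hL y).trans (le_max_left _ _)

theorem ContinuousOn.continuous_comp_max_snd {g : ℝ × ℝ → ℝ} (hg : ContinuousOn g {p | 0 ≤ p.2}) :
    Continuous fun p : ℝ × ℝ => g (p.1, max p.2 0) :=
  hg.comp_continuous (by fun_prop) fun p => le_max_right p.2 0

theorem eqOn_comp_max_snd (g : ℝ × ℝ → ℝ) :
    EqOn (fun p : ℝ × ℝ => g (p.1, max p.2 0)) g {p | 0 ≤ p.2} := fun p hp => by
  simp only [max_eq_left (show 0 ≤ p.2 from hp)]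

theorem continuous_data_uniform_convergence_general
    (f : ℝ → ℝ) (hf : Admissible f)
    (a b : ℝ → ℝ) (hb : Continuous b)
    (h : ℝ × ℝ → ℝ) (hh : ContinuousOn h {p : ℝ × ℝ | 0 ≤ p.2})
    (w : ℝ × ℝ → ℝ) (hwcont : ContinuousOn w {p : ℝ × ℝ | 0 ≤ p.2})
    (hweq : ∀ x t : ℝ, 0 ≤ t →
      w (x, t) = (1/2) * (a (x - t) + a (x + t))
        + (1/2) * (∫ y in (x - t)..(x + t), b y)
        + (1/2) * ∫ s in (0:ℝ)..t, ∫ y in (x - t + s)..(x + t - s),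
            (f (w (y, s)) + h (y, s)))
    (aN bN : ℝ → ℝ → ℝ) (hN : ℝ → ℝ × ℝ → ℝ)
    (hbNsmooth : ∀ ε ∈ Set.Ioc (0:ℝ) 1, ContDiff ℝ (⊤ : ℕ∞) (bN ε))
    (hhNsmooth : ∀ ε ∈ Set.Ioc (0:ℝ) 1, ContDiff ℝ (⊤ : ℕ∞) (hN ε))
    (haNconv : ∀ K : Set ℝ, IsCompact K → TendstoUniformlyOn aN a (𝓝[>] (0:ℝ)) K)
    (hbNconv : ∀ K : Set ℝ, IsCompact K → TendstoUniformlyOn bN b (𝓝[>] (0:ℝ)) K)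
    (hhNconv : ∀ K : Set (ℝ × ℝ), K ⊆ {p : ℝ × ℝ | 0 ≤ p.2} → IsCompact K →
      TendstoUniformlyOn hN h (𝓝[>] (0:ℝ)) K)
    (u : ℝ → ℝ × ℝ → ℝ)
    (husmooth : ∀ ε ∈ Set.Ioc (0:ℝ) 1, ContDiff ℝ (⊤ : ℕ∞) (u ε))
    (hpde : ∀ ε ∈ Set.Ioc (0:ℝ) 1, ∀ p : ℝ × ℝ, waveOp (u ε) p = f (u ε p) + hN ε p)
    (hinit0 : ∀ ε ∈ Set.Ioc (0:ℝ) 1, ∀ x : ℝ, u ε (x, 0) = aN ε x)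
    (hinit1 : ∀ ε ∈ Set.Ioc (0:ℝ) 1, ∀ x : ℝ, deriv (fun s => u ε (x, s)) 0 = bN ε x) :
    ∀ κ : ℝ, 0 < κ → ∀ T : ℝ, 0 ≤ T → T ≤ κ →
      TendstoUniformlyOn u w (𝓝[>] (0:ℝ)) (KT κ T) := by
  intro κ _ T _ hTκ
  obtain ⟨K, hfK⟩ := hf.exists_lipschitzWith
  -- `w` and `h` are only continuous on `t ≥ 0`; composing with `t ↦ max t 0` extends them.
  have hW : IsDuhamelSolution f a b (fun p => h (p.1, max p.2 0)) (fun p => w (p.1, max p.2 0)) :=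
    IsDuhamelSolution.congr hweq (eqOn_comp_max_snd w) (eqOn_comp_max_snd h)
  have hu : ∀ᶠ ε in 𝓝[>] (0:ℝ), IsDuhamelSolution f (aN ε) (bN ε) (hN ε) (u ε) ∧
      Continuous (u ε) ∧ Continuous (hN ε) ∧ Continuous (bN ε) := by
    filter_upwards [Ioc_mem_nhdsGT zero_lt_one] with ε hε
    have hsol := isDuhamelSolution_of_waveOp_eq
      ((husmooth ε hε).of_le (WithTop.coe_le_coe.2 le_top)) (hpde ε hε)
    rw [funext (hinit0 ε hε), show (fun x => partialT (u ε) (x, 0)) = bN ε from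
      funext (hinit1 ε hε)] at hsol
    exact ⟨hsol, (husmooth ε hε).continuous, (hhNsmooth ε hε).continuous,
      (hbNsmooth ε hε).continuous⟩
  have hKT : KT κ T ⊆ {p | 0 ≤ p.2} := fun p hp => hp.1
  refine (tendstoUniformlyOn_KT_of_isDuhamelSolution hfK hW hwcont.continuous_comp_max_snd
    hh.continuous_comp_max_snd hb hu hTκ (haNconv _ isCompact_Icc) (hbNconv _ isCompact_Icc)
    ((hhNconv _ hKT (isCompact_KT κ T)).congr_right
      ((eqOn_comp_max_snd h).symm.mono hKT))).congr_right ((eqOn_comp_max_snd w).mono hKT)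

/-- Consistency with continuous data: if the regularized data converge locally
uniformly to continuous data, the smooth solutions of the semilinear wave
equation converge uniformly on each trapezoid `K_T` to the continuous weak
solution. -/
theorem continuous_data_uniform_convergence
    (f : ℝ → ℝ) (hf : Admissible f)
    (a b : ℝ → ℝ) (ha : Continuous a) (hb : Continuous b)
    (h : ℝ × ℝ → ℝ) (hh : ContinuousOn h {p : ℝ × ℝ | 0 ≤ p.2})
    (w : ℝ × ℝ → ℝ) (hwcont : ContinuousOn w {p : ℝ × ℝ | 0 ≤ p.2})
    (hweq : ∀ x t : ℝ, 0 ≤ t →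
      w (x, t) = (1/2) * (a (x - t) + a (x + t))
        + (1/2) * (∫ y in (x - t)..(x + t), b y)
        + (1/2) * ∫ s in (0:ℝ)..t, ∫ y in (x - t + s)..(x + t - s),
            (f (w (y, s)) + h (y, s)))
    (aN bN : ℝ → ℝ → ℝ) (hN : ℝ → ℝ × ℝ → ℝ)
    (haNsmooth : ∀ ε ∈ Set.Ioc (0:ℝ) 1, ContDiff ℝ (⊤ : ℕ∞) (aN ε))
    (hbNsmooth : ∀ ε ∈ Set.Ioc (0:ℝ) 1, ContDiff ℝ (⊤ : ℕ∞) (bN ε))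
    (hhNsmooth : ∀ ε ∈ Set.Ioc (0:ℝ) 1, ContDiff ℝ (⊤ : ℕ∞) (hN ε))
    (haNconv : ∀ K : Set ℝ, IsCompact K → TendstoUniformlyOn aN a (𝓝[>] (0:ℝ)) K)
    (hbNconv : ∀ K : Set ℝ, IsCompact K → TendstoUniformlyOn bN b (𝓝[>] (0:ℝ)) K)
    (hhNconv : ∀ K : Set (ℝ × ℝ), K ⊆ {p : ℝ × ℝ | 0 ≤ p.2} → IsCompact K →
      TendstoUniformlyOn hN h (𝓝[>] (0:ℝ)) K)
    (u : ℝ → ℝ × ℝ → ℝ)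
    (husmooth : ∀ ε ∈ Set.Ioc (0:ℝ) 1, ContDiff ℝ (⊤ : ℕ∞) (u ε))
    (hpde : ∀ ε ∈ Set.Ioc (0:ℝ) 1, ∀ p : ℝ × ℝ, waveOp (u ε) p = f (u ε p) + hN ε p)
    (hinit0 : ∀ ε ∈ Set.Ioc (0:ℝ) 1, ∀ x : ℝ, u ε (x, 0) = aN ε x)
    (hinit1 : ∀ ε ∈ Set.Ioc (0:ℝ) 1, ∀ x : ℝ, deriv (fun s => u ε (x, s)) 0 = bN ε x) :
    ∀ κ : ℝ, 0 < κ → ∀ T : ℝ, 0 ≤ T → T ≤ κ →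
      TendstoUniformlyOn u w (𝓝[>] (0:ℝ)) (KT κ T) :=
  continuous_data_uniform_convergence_general f hf a b hb h hh w hwcont hweq aN bN hN hbNsmooth
    hhNsmooth haNconv hbNconv hhNconv u husmooth hpde hinit0 hinit1
end
end

section
/- Let Ω ⊆ ℝⁿ be open and let f : ℝ → ℝ be smooth such that every derivative of f grows at most polynomially at infinity. If (u_ε)_{ε∈(0,1]} is a moderate net of smooth functions on Ω, then (f ∘ u_ε)_{ε∈(0,1]} is a moderate net of smooth functions on Ω. -/
/-!
On a compact `K` the values `u_ε` are bounded by `C ε^{-p}`, so each polynomially bounded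
derivative `f⁽ⁱ⁾` evaluated along `u_ε` is again bounded by a negative power of `ε`.
Taking common constants for the finitely many orders `i ≤ k`, the Faà di Bruno estimate
`‖Dᵏ(f ∘ v)‖ ≤ k! · A · Dᵏ`, valid when `|f⁽ⁱ⁾ ∘ v| ≤ A` and `‖Dⁱ v‖ ≤ D` with `1 ≤ D`
for `i ≤ k`, turns these bounds into a moderate bound for `f ∘ u_ε`.
-/

open Real Set Filter MeasureTheory Topology

noncomputable section

/-- A moderate net of smooth functions on an open set `Ω`. -/
def ModerateOn {E : Type*} [NormedAddCommGroup E] [NormedSpace ℝ E]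
    (Ω : Set E) (u : ℝ → E → ℝ) : Prop :=
  (∀ ε ∈ Set.Ioc (0:ℝ) 1, ContDiffOn ℝ (⊤ : ℕ∞) (u ε) Ω) ∧
  ∀ K : Set E, K ⊆ Ω → IsCompact K → ∀ k : ℕ,
    ∃ p : ℝ, 0 ≤ p ∧ ∃ C : ℝ, 0 < C ∧ ∃ ε₀ : ℝ, 0 < ε₀ ∧
      ∀ ε ∈ Set.Ioc (0:ℝ) 1, ε ≤ ε₀ → ∀ x ∈ K,
        ‖iteratedFDerivWithin ℝ k (u ε) Ω x‖ ≤ C * ε ^ (-p)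

open scoped Nat

section RpowBounds

variable {ε p q C D : ℝ}

lemma one_le_rpow_neg (hε : ε ∈ Ioc (0 : ℝ) 1) (hp : 0 ≤ p) : 1 ≤ ε ^ (-p) :=
  one_le_rpow_of_pos_of_le_one_of_nonpos hε.1 hε.2 (neg_nonpos.2 hp)

lemma mul_rpow_neg_le_mul_rpow_neg (hε : ε ∈ Ioc (0 : ℝ) 1) (hpq : p ≤ q) (hC : 0 ≤ C)
    (hCD : C ≤ D) : C * ε ^ (-p) ≤ D * ε ^ (-q) :=
  mul_le_mul hCD (rpow_le_rpow_of_exponent_ge hε.1 hε.2 (neg_le_neg hpq))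
    (rpow_nonneg hε.1.le _) (hC.trans hCD)

end RpowBounds

lemma exists_uniform_rpow_bound {α : Type*} (s : Set α) (g : ℕ → ℝ → α → ℝ)
    (h : ∀ i, ∃ p : ℝ, 0 ≤ p ∧ ∃ C : ℝ, 0 < C ∧ ∃ ε₀ : ℝ, 0 < ε₀ ∧
      ∀ ε ∈ Ioc (0 : ℝ) 1, ε ≤ ε₀ → ∀ x ∈ s, g i ε x ≤ C * ε ^ (-p)) (k : ℕ) :
    ∃ p : ℝ, 0 ≤ p ∧ ∃ C : ℝ, 1 ≤ C ∧ ∃ ε₀ : ℝ, 0 < ε₀ ∧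
      ∀ ε ∈ Ioc (0 : ℝ) 1, ε ≤ ε₀ → ∀ x ∈ s, ∀ i ≤ k, g i ε x ≤ C * ε ^ (-p) := by
  induction k with
  | zero =>
    obtain ⟨p, hp, C, hC, ε₀, hε₀, hbound⟩ := h 0
    refine ⟨p, hp, max C 1, le_max_right _ _, ε₀, hε₀, fun ε hε hεε₀ x hx i hi => ?_⟩
    obtain rfl : i = 0 := Nat.le_zero.mp hi
    exact (hbound ε hε hεε₀ x hx).trans
      (mul_rpow_neg_le_mul_rpow_neg hε le_rfl hC.le (le_max_left _ _))
  | succ k ih =>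
    obtain ⟨p, hp, C, hC, ε₀, hε₀, hbound⟩ := ih
    obtain ⟨q, hq, D, hD, δ₀, hδ₀, hbound'⟩ := h (k + 1)
    refine ⟨max p q, le_max_of_le_left hp, max C D, le_max_of_le_left hC, min ε₀ δ₀,
      lt_min hε₀ hδ₀, fun ε hε hεle x hx i hi => ?_⟩
    rcases Nat.le_succ_iff.mp hi with hik | rfl
    · exact (hbound ε hε (hεle.trans (min_le_left _ _)) x hx i hik).trans
        (mul_rpow_neg_le_mul_rpow_neg hε (le_max_left _ _) (by linarith) (le_max_left _ _))
    · exact (hbound' ε hε (hεle.trans (min_le_right _ _)) x hx).trans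
        (mul_rpow_neg_le_mul_rpow_neg hε (le_max_right _ _) hD.le (le_max_right _ _))

lemma exists_rpow_bound_comp_of_polynomial_bound {α : Type*} (s : Set α) (v : ℝ → α → ℝ)
    (hv : ∃ p : ℝ, 0 ≤ p ∧ ∃ C : ℝ, 0 < C ∧ ∃ ε₀ : ℝ, 0 < ε₀ ∧
      ∀ ε ∈ Ioc (0 : ℝ) 1, ε ≤ ε₀ → ∀ x ∈ s, |v ε x| ≤ C * ε ^ (-p))
    (g : ℝ → ℝ) (hg : ∃ C : ℝ, 0 < C ∧ ∃ N : ℕ, ∀ y : ℝ, |g y| ≤ C * (1 + |y|) ^ N) :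
    ∃ p : ℝ, 0 ≤ p ∧ ∃ C : ℝ, 0 < C ∧ ∃ ε₀ : ℝ, 0 < ε₀ ∧
      ∀ ε ∈ Ioc (0 : ℝ) 1, ε ≤ ε₀ → ∀ x ∈ s, |g (v ε x)| ≤ C * ε ^ (-p) := by
  obtain ⟨p, hp, C, hC, ε₀, hε₀, hv⟩ := hv
  obtain ⟨B, hB, N, hg⟩ := hg
  refine ⟨p * N, by positivity, B * (1 + C) ^ N, by positivity, ε₀, hε₀,
    fun ε hε hεε₀ x hx => ?_⟩
  have hR := one_le_rpow_neg hε hp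
  have hvx := hv ε hε hεε₀ x hx
  calc |g (v ε x)| ≤ B * (1 + |v ε x|) ^ N := hg _
    _ ≤ B * ((1 + C) * ε ^ (-p)) ^ N := by gcongr; nlinarith
    _ = B * (1 + C) ^ N * ε ^ (-(p * N)) := by
      rw [← neg_mul, rpow_mul_natCast hε.1.le, mul_pow, mul_assoc]

lemma norm_iteratedFDerivWithin_comp_le_of_le {E : Type*} [NormedAddCommGroup E]
    [NormedSpace ℝ E] {f : ℝ → ℝ} {v : E → ℝ} {s : Set E} {x : E} {k : ℕ} {A D : ℝ}
    (hf : ContDiff ℝ k f) (hv : ContDiffOn ℝ k v s) (hs : UniqueDiffOn ℝ s) (hx : x ∈ s)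
    (hD : 1 ≤ D) (hfA : ∀ i ≤ k, |iteratedDeriv i f (v x)| ≤ A)
    (hvD : ∀ i ≤ k, ‖iteratedFDerivWithin ℝ i v s x‖ ≤ D) :
    ‖iteratedFDerivWithin ℝ k (f ∘ v) s x‖ ≤ k ! * A * D ^ k := by
  refine norm_iteratedFDerivWithin_comp_le hf.contDiffOn hv le_rfl uniqueDiffOn_univ hs
    (mapsTo_univ _ _) hx (fun i hi => ?_) (fun i hi hik => (hvD i hik).trans (le_self_pow₀ hD
      (by omega)))
  rw [iteratedFDerivWithin_univ, norm_iteratedFDeriv_eq_norm_iteratedDeriv, Real.norm_eq_abs]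
  exact hfA i hi

/-- Superposition with a smooth, polynomially bounded function maps moderate
nets to moderate nets. -/
theorem superposition_moderate {n : ℕ}
    (Ω : Set (EuclideanSpace ℝ (Fin n))) (hΩ : IsOpen Ω)
    (f : ℝ → ℝ) (hf : ContDiff ℝ (⊤ : ℕ∞) f)
    (hpoly : ∀ k : ℕ, ∃ C : ℝ, 0 < C ∧ ∃ N : ℕ, ∀ y : ℝ,
      |iteratedDeriv k f y| ≤ C * (1 + |y|) ^ N)
    (u : ℝ → EuclideanSpace ℝ (Fin n) → ℝ) (hu : ModerateOn Ω u) :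
    ModerateOn Ω (fun ε x => f (u ε x)) := by
  obtain ⟨hsmooth, hmod⟩ := hu
  refine ⟨fun ε hε => hf.comp_contDiffOn (hsmooth ε hε), fun K hKΩ hK k => ?_⟩
  obtain ⟨p, hp, C, hC, ε₀, hε₀, hu_le⟩ := exists_uniform_rpow_bound K _ (hmod K hKΩ hK) k
  have hf_mod := fun i => exists_rpow_bound_comp_of_polynomial_bound K u
    ⟨p, hp, C, by positivity, ε₀, hε₀, fun ε hε hεε₀ x hx => by
      simpa using hu_le ε hε hεε₀ x hx 0 k.zero_le⟩ _ (hpoly i)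
  obtain ⟨q, hq, B, hB, δ₀, hδ₀, hf_le⟩ := exists_uniform_rpow_bound K _ hf_mod k
  refine ⟨q + p * k, by positivity, k ! * B * C ^ k, by positivity, min ε₀ δ₀,
    lt_min hε₀ hδ₀, fun ε hε hεle x hx => ?_⟩
  calc ‖iteratedFDerivWithin ℝ k (f ∘ u ε) Ω x‖
      ≤ k ! * (B * ε ^ (-q)) * (C * ε ^ (-p)) ^ k :=
        norm_iteratedFDerivWithin_comp_le_of_le (hf.of_le (by exact_mod_cast le_top))
          ((hsmooth ε hε).of_le (by exact_mod_cast le_top)) hΩ.uniqueDiffOn (hKΩ hx)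
          (one_le_mul_of_one_le_of_one_le hC (one_le_rpow_neg hε hp))
          (fun i hi => hf_le ε hε (hεle.trans (min_le_right _ _)) x hx i hi)
          (fun i hi => hu_le ε hε (hεle.trans (min_le_left _ _)) x hx i hi)
    _ = k ! * B * C ^ k * ε ^ (-(q + p * k)) := by
      rw [neg_add, ← neg_mul, rpow_add hε.1, rpow_mul_natCast hε.1.le]
      ring
end
end

section
/- Let φ ∈ S(ℝⁿ) satisfy ∫φ(x)dx = 1 and ∫x^α φ(x)dx = 0 for all multi-indices α with |α| ≥ 1, and set φ_ε(x) = ε^{−n}φ(x/ε). Let χ ∈ C_c^∞(ℝⁿ) be identically equal to 1 on a neighborhood of 0. Then for every f ∈ C^∞(ℝⁿ), the net u_ε(x) = ∫ f(x−y) χ(y) φ_ε(y) dy satisfies: (u_ε − f)_{ε∈(0,1]} is a null net on ℝⁿ, i.e., for every compact K ⊂ ℝⁿ, every multi-index α and every q ≥ 0, sup_{x∈K} |∂^α(u_ε − f)(x)| = O(ε^q) as ε → 0. -/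
/-!
Expand `y ↦ f (x - y)` by Taylor's formula to order `N` at `y = 0`. Since `χ φ_ε` lives at scale
`ε`, the remainder `O(‖y‖ ^ (N + 1))` contributes `O(ε ^ (N + 1))`. After the substitution
`y = ε z`, the degree-`j` term becomes `ε ^ j ∫ χ(ε z) φ(z) P_j(z) dz`; as `χ = 1` near `0` and `φ`
decays rapidly, replacing `χ(ε z)` by `1` costs `O(ε ^ N)` for every `N`, and then the moment
conditions on `φ` kill every term but the constant one, `f x`. Derivatives commute with the
convolution, so the same estimate applied to `D^k f` controls every derivative.
-/

open Real Set Filter MeasureTheory Topology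

noncomputable section

/-- A null net of smooth functions: all derivatives tend to zero faster than
any power of `ε`, locally uniformly. -/
def NullNet {E : Type*} [NormedAddCommGroup E] [NormedSpace ℝ E]
    (u : ℝ → E → ℝ) : Prop :=
  (∀ ε ∈ Set.Ioc (0:ℝ) 1, ContDiff ℝ (⊤ : ℕ∞) (u ε)) ∧
  ∀ K : Set E, IsCompact K → ∀ k : ℕ, ∀ q : ℝ, 0 ≤ q →
    ∃ C : ℝ, 0 < C ∧ ∃ ε₀ : ℝ, 0 < ε₀ ∧
      ∀ ε ∈ Set.Ioc (0:ℝ) 1, ε ≤ ε₀ → ∀ x ∈ K,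
        ‖iteratedFDeriv ℝ k (u ε) x‖ ≤ C * ε ^ q

open scoped Convolution ContDiff SchwartzMap
open ContinuousLinearMap (lsmul)

section Taylor

variable {E F : Type*} [NormedAddCommGroup E] [NormedSpace ℝ E]
  [NormedAddCommGroup F] [NormedSpace ℝ F] [CompleteSpace F]

theorem norm_sub_sum_iteratedFDeriv_le {f : E → F} {N : ℕ} (hf : ContDiff ℝ (N + 1) f)
    {x h : E} {M : ℝ} (hM : ∀ t ∈ Icc (0 : ℝ) 1, ‖iteratedFDeriv ℝ (N + 1) f (x + t • h)‖ ≤ M) :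
    ‖f (x + h) - ∑ j ∈ Finset.range (N + 1),
        (j.factorial : ℝ)⁻¹ • iteratedFDeriv ℝ j f x (fun _ ↦ h)‖
      ≤ (N.factorial : ℝ)⁻¹ * (M * ‖h‖ ^ (N + 1)) := by
  rw [map_add_eq_sum_add_integral_iteratedFDeriv (fun t _ ↦ hf.contDiffAt), add_sub_cancel_left,
    norm_smul, Real.norm_of_nonneg (by positivity)]
  gcongr
  refine (intervalIntegral.norm_integral_le_of_norm_le_const (C := M * ‖h‖ ^ (N + 1))
    fun t ht ↦ ?_).trans (by simp)
  rw [uIoc_of_le zero_le_one] at ht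
  have h1t : ‖(1 - t) ^ N‖ ≤ 1 := by
    rw [norm_pow, Real.norm_of_nonneg (by linarith [ht.2])]
    exact pow_le_one₀ (by linarith [ht.2]) (by linarith [ht.1])
  calc ‖(1 - t) ^ N • iteratedFDeriv ℝ (N + 1) f (x + t • h) (fun _ ↦ h)‖
      ≤ 1 * (M * ∏ _ : Fin (N + 1), ‖h‖) := by
        rw [norm_smul]
        gcongr
        exact ((iteratedFDeriv ℝ (N + 1) f (x + t • h)).le_opNorm _).trans
          (by gcongr; exact hM t (Ioc_subset_Icc_self ht))
    _ = M * ‖h‖ ^ (N + 1) := by simp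

theorem IsCompact.exists_norm_sub_sum_iteratedFDeriv_le {f : E → F} {N : ℕ}
    (hf : ContDiff ℝ (N + 1) f) {K L : Set E} (hK : IsCompact K) (hL : IsCompact L) :
    ∃ C ≥ 0, ∀ x ∈ K, ∀ h ∈ L,
      ‖f (x + h) - ∑ j ∈ Finset.range (N + 1),
          (j.factorial : ℝ)⁻¹ • iteratedFDeriv ℝ j f x (fun _ ↦ h)‖ ≤ C * ‖h‖ ^ (N + 1) := by
  have hT : IsCompact ((fun p : E × E × ℝ ↦ p.1 + p.2.2 • p.2.1) '' (K ×ˢ L ×ˢ Icc 0 1)) :=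
    (hK.prod (hL.prod isCompact_Icc)).image (by fun_prop)
  obtain ⟨M, hM⟩ := hT.exists_bound_of_continuousOn
    (hf.continuous_iteratedFDeriv le_rfl).continuousOn
  refine ⟨(N.factorial : ℝ)⁻¹ * max M 0, by positivity, fun x hx h hh ↦ ?_⟩
  refine (norm_sub_sum_iteratedFDeriv_le (M := max M 0) hf fun t ht ↦ ?_).trans ?_
  · exact (hM _ ⟨(x, h, t), ⟨hx, hh, ht⟩, rfl⟩).trans (le_max_left M 0)
  · rw [mul_assoc]

end Taylor

section Convolution

variable {E F : Type*} [NormedAddCommGroup E] [MeasurableSpace E] {μ : Measure E}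
  [NormedAddCommGroup F] [NormedSpace ℝ F] {k : E → ℝ}

theorem convolution_lsmul_linearIsometryEquiv_comp {G : Type*} [NormedAddCommGroup G]
    [NormedSpace ℝ G] [CompleteSpace F] [CompleteSpace G] (e : F ≃ₗᵢ[ℝ] G) (h : E → F) (x : E) :
    (k ⋆[lsmul ℝ ℝ, μ] (e ∘ h)) x = e ((k ⋆[lsmul ℝ ℝ, μ] h) x) := by
  simp only [convolution_lsmul, Function.comp_apply, ← LinearIsometryEquiv.map_smul]
  exact e.toLinearIsometry.integral_comp_comm _

variable [NormedSpace ℝ E] [ProperSpace E] [BorelSpace E] [IsFiniteMeasureOnCompacts μ]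

theorem HasCompactSupport.hasFDerivAt_convolution_lsmul (hkc : HasCompactSupport k)
    (hk : Continuous k) {g : E → F} (hg : ContDiff ℝ 1 g) (x₀ : E) :
    HasFDerivAt (k ⋆[lsmul ℝ ℝ, μ] g) ((k ⋆[lsmul ℝ ℝ, μ] fderiv ℝ g) x₀) x₀ := by
  have hg' : Continuous (fderiv ℝ g) := hg.continuous_fderiv one_ne_zero
  obtain ⟨M, hM⟩ := (((isCompact_closedBall x₀ 1).prod hkc).image continuous_sub)
    |>.exists_bound_of_continuousOn hg'.continuousOn
  refine hasFDerivAt_integral_of_dominated_of_fderiv_le (F := fun x t ↦ k t • g (x - t))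
    (F' := fun x t ↦ k t • fderiv ℝ g (x - t)) (bound := fun t ↦ ‖k t‖ * M)
    (Metric.ball_mem_nhds x₀ one_pos) (Eventually.of_forall fun x ↦ ?_)
    ((hk.smul (hg.continuous.comp (continuous_sub_left x₀))).integrable_of_hasCompactSupport
      hkc.smul_right)
    (hk.smul (hg'.comp (continuous_sub_left x₀))).aestronglyMeasurable
    (ae_of_all _ fun t x hx ↦ ?_)
    ((hk.norm.mul continuous_const).integrable_of_hasCompactSupport hkc.norm.mul_right)
    (ae_of_all _ fun t x _ ↦ ?_)
  · exact (hk.smul (hg.continuous.comp (continuous_sub_left x))).aestronglyMeasurable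
  · rw [norm_smul]
    by_cases ht : t ∈ tsupport k
    · exact mul_le_mul_of_nonneg_left
        (hM _ ⟨(x, t), ⟨Metric.ball_subset_closedBall hx, ht⟩, rfl⟩) (norm_nonneg _)
    · simp [image_eq_zero_of_notMem_tsupport ht]
  · exact ((hg.differentiable one_ne_zero (x - t)).hasFDerivAt.comp x
      ((hasFDerivAt_id x).sub_const t)).const_smul (k t)

theorem iteratedFDeriv_convolution_lsmul [CompleteSpace F] (hkc : HasCompactSupport k)
    (hk : Continuous k) {g : E → F} (hg : ContDiff ℝ ∞ g) (i : ℕ) :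
    iteratedFDeriv ℝ i (k ⋆[lsmul ℝ ℝ, μ] g) = k ⋆[lsmul ℝ ℝ, μ] iteratedFDeriv ℝ i g := by
  induction i with
  | zero =>
    ext1 x
    simp only [iteratedFDeriv_zero_eq_comp, convolution_lsmul_linearIsometryEquiv_comp,
      Function.comp_apply]
  | succ i ih =>
    ext1 x
    have hgi : ContDiff ℝ 1 (iteratedFDeriv ℝ i g) :=
      hg.iteratedFDeriv_right (by exact_mod_cast le_top)
    rw [iteratedFDeriv_succ_eq_comp_left, ih, Function.comp_apply,
      (hkc.hasFDerivAt_convolution_lsmul hk hgi x).fderiv, iteratedFDeriv_succ_eq_comp_left]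
    exact (convolution_lsmul_linearIsometryEquiv_comp (μ := μ) (F := E →L[ℝ] E [×i]→L[ℝ] F)
      (G := ContinuousMultilinearMap ℝ (fun _ : Fin (i + 1) ↦ E) F)
      (continuousMultilinearCurryLeftEquiv ℝ (fun _ : Fin (i + 1) ↦ E) F).symm _ _).symm

end Convolution

theorem SchwartzMap.integrable_smul_of_norm_le_pow {D F : Type*} [NormedAddCommGroup D]
    [NormedSpace ℝ D] [MeasurableSpace D] [BorelSpace D] [SecondCountableTopology D]
    [NormedAddCommGroup F] [NormedSpace ℝ F] {μ : Measure D} [μ.HasTemperateGrowth]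
    (φ : 𝓢(D, ℝ)) {h : D → F} (hh : Continuous h) {C : ℝ} {a : ℕ}
    (hb : ∀ z, ‖h z‖ ≤ C * ‖z‖ ^ a) : Integrable (fun z ↦ φ z • h z) μ :=
  ((φ.integrable_pow_mul μ a).const_mul C).mono' (φ.continuous.smul hh).aestronglyMeasurable
    (ae_of_all _ fun z ↦ by
      rw [norm_smul]
      linarith [mul_le_mul_of_nonneg_left (hb z) (norm_nonneg (φ z))])

theorem exists_abs_sub_one_le_mul_norm_pow {E : Type*} [NormedAddCommGroup E] {χ : E → ℝ}
    (hχc : Continuous χ) (hχsupp : HasCompactSupport χ) (hχone : ∀ᶠ w in 𝓝 0, χ w = 1)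
    (N : ℕ) : ∃ C ≥ 0, ∀ w, |χ w - 1| ≤ C * ‖w‖ ^ N := by
  obtain ⟨B, hB⟩ := hχsupp.exists_bound_of_continuous hχc
  have hB0 : 0 ≤ B := (norm_nonneg _).trans (hB 0)
  obtain ⟨δ, hδ, hχδ⟩ := Metric.eventually_nhds_iff.mp hχone
  refine ⟨(B + 1) / δ ^ N, by positivity, fun w ↦ ?_⟩
  by_cases hw : ‖w‖ < δ
  · rw [hχδ (by simpa using hw), sub_self, abs_zero]
    positivity
  · calc |χ w - 1| ≤ B + 1 := (abs_sub _ _).trans (by simpa using hB w)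
      _ ≤ (B + 1) * (‖w‖ / δ) ^ N :=
        le_mul_of_one_le_right (by positivity) (one_le_pow₀ ((one_le_div hδ).mpr (not_lt.mp hw)))
      _ = (B + 1) / δ ^ N * ‖w‖ ^ N := by rw [div_pow]; ring

section Mollifier

variable {n : ℕ} {F : Type*} [NormedAddCommGroup F] [NormedSpace ℝ F]

theorem integral_rescale_smul {ε : ℝ} (hε : 0 < ε) (ψ : EuclideanSpace ℝ (Fin n) → ℝ)
    (h : EuclideanSpace ℝ (Fin n) → F) :
    ∫ y, ((ε ^ n)⁻¹ * ψ (ε⁻¹ • y)) • h y = ∫ z, ψ z • h (ε • z) := by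
  have key := Measure.integral_comp_inv_smul_of_nonneg volume (fun z ↦ ψ z • h (ε • z)) hε.le
  simp only [smul_inv_smul₀ hε.ne', finrank_euclideanSpace_fin] at key
  simp_rw [mul_smul, integral_smul, key, inv_smul_smul₀ (pow_ne_zero n hε.ne')]

def cutoffMollifier (φ : 𝓢(EuclideanSpace ℝ (Fin n), ℝ)) (χ : EuclideanSpace ℝ (Fin n) → ℝ)
    (ε : ℝ) (y : EuclideanSpace ℝ (Fin n)) : ℝ :=
  χ y * ((ε ^ n)⁻¹ * φ (ε⁻¹ • y))

variable {φ : 𝓢(EuclideanSpace ℝ (Fin n), ℝ)} {χ : EuclideanSpace ℝ (Fin n) → ℝ} {ε : ℝ}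

theorem continuous_cutoffMollifier (hχ : Continuous χ) : Continuous (cutoffMollifier φ χ ε) :=
  hχ.mul (continuous_const.mul (φ.continuous.comp (continuous_const_smul _)))

theorem contDiff_cutoffMollifier (hχ : ContDiff ℝ ∞ χ) : ContDiff ℝ ∞ (cutoffMollifier φ χ ε) :=
  hχ.mul (contDiff_const.mul ((φ.smooth ⊤).comp (contDiff_const_smul _)))

theorem hasCompactSupport_cutoffMollifier (hχ : HasCompactSupport χ) :
    HasCompactSupport (cutoffMollifier φ χ ε) :=
  hχ.mul_right

theorem integral_cutoffMollifier_smul (hε : 0 < ε) (h : EuclideanSpace ℝ (Fin n) → F) :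
    ∫ y, cutoffMollifier φ χ ε y • h y = ∫ z, φ z • (χ (ε • z) • h (ε • z)) := by
  rw [← integral_rescale_smul hε φ fun y ↦ χ y • h y]
  simp only [cutoffMollifier, smul_smul, mul_comm (χ _)]

theorem exists_norm_integral_cutoffMollifier_smul_le (hχc : Continuous χ)
    (hχsupp : HasCompactSupport χ) (a : ℕ) :
    ∃ C ≥ 0, ∀ ε > 0, ∀ M ≥ 0, ∀ R : EuclideanSpace ℝ (Fin n) → F,
      (∀ y ∈ tsupport χ, ‖R y‖ ≤ M * ‖y‖ ^ a) →
        ‖∫ y, cutoffMollifier φ χ ε y • R y‖ ≤ C * M * ε ^ a := by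
  obtain ⟨B, hB⟩ := hχsupp.exists_bound_of_continuous hχc
  have hB0 : 0 ≤ B := (norm_nonneg _).trans (hB 0)
  have hS0 : 0 ≤ ∫ z, ‖z‖ ^ a * ‖φ z‖ := integral_nonneg fun z ↦ by positivity
  refine ⟨B * ∫ z, ‖z‖ ^ a * ‖φ z‖, by positivity, fun ε hε M hM R hR ↦ ?_⟩
  have hmoll : Continuous (cutoffMollifier φ χ ε) := continuous_cutoffMollifier hχc
  have hpoint : ∀ y,
      ‖cutoffMollifier φ χ ε y • R y‖ ≤ M * (|cutoffMollifier φ χ ε y| * ‖y‖ ^ a) := by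
    intro y
    by_cases hy : y ∈ tsupport χ
    · rw [norm_smul, Real.norm_eq_abs, mul_left_comm]
      exact mul_le_mul_of_nonneg_left (hR y hy) (abs_nonneg _)
    · simp [cutoffMollifier, image_eq_zero_of_notMem_tsupport hy]
  have hscale : ∫ y, |cutoffMollifier φ χ ε y| * ‖y‖ ^ a
      = ∫ z, |φ z| * (|χ (ε • z)| * ‖ε • z‖ ^ a) := by
    have hrescale := integral_rescale_smul hε (fun z ↦ |φ z|) fun y ↦ |χ y| * ‖y‖ ^ a
    simp only [smul_eq_mul] at hrescale
    rw [← hrescale]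
    congr 1 with y
    simp only [cutoffMollifier, abs_mul, abs_inv, abs_pow, abs_of_pos hε]
    ring
  have hbound : ∀ z,
      |φ z| * (|χ (ε • z)| * ‖ε • z‖ ^ a) ≤ (B * ε ^ a) * (‖z‖ ^ a * ‖φ z‖) := by
    intro z
    rw [norm_smul, Real.norm_of_nonneg hε.le, mul_pow, ← Real.norm_eq_abs]
    have hχz : |χ (ε • z)| ≤ B := Real.norm_eq_abs _ ▸ hB (ε • z)
    calc ‖φ z‖ * (|χ (ε • z)| * (ε ^ a * ‖z‖ ^ a))
        ≤ ‖φ z‖ * (B * (ε ^ a * ‖z‖ ^ a)) := by gcongr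
      _ = _ := by ring
  calc ‖∫ y, cutoffMollifier φ χ ε y • R y‖
      ≤ ∫ y, M * (|cutoffMollifier φ χ ε y| * ‖y‖ ^ a) :=
        norm_integral_le_of_norm_le (((hmoll.abs.mul (continuous_norm.pow a)).const_mul M
          |>.integrable_of_hasCompactSupport
            (hasCompactSupport_cutoffMollifier hχsupp).abs.mul_right.mul_left))
          (ae_of_all _ hpoint)
    _ = M * ∫ z, |φ z| * (|χ (ε • z)| * ‖ε • z‖ ^ a) := by rw [integral_const_mul, hscale]
    _ ≤ M * ∫ z, (B * ε ^ a) * (‖z‖ ^ a * ‖φ z‖) :=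
        mul_le_mul_of_nonneg_left (integral_mono_of_nonneg (ae_of_all _ fun z ↦ by positivity)
          ((φ.integrable_pow_mul volume a).const_mul _) (ae_of_all _ hbound)) hM
    _ = B * (∫ z, ‖z‖ ^ a * ‖φ z‖) * M * ε ^ a := by rw [integral_const_mul]; ring

theorem exists_norm_integral_cutoffMollifier_smul_multilinear_sub_le (hχc : Continuous χ)
    (hχsupp : HasCompactSupport χ) (hχone : ∀ᶠ y in 𝓝 0, χ y = 1) (j N : ℕ) :
    ∃ C ≥ 0, ∀ ε ∈ Ioc (0 : ℝ) 1,
      ∀ A : ContinuousMultilinearMap ℝ (fun _ : Fin j ↦ EuclideanSpace ℝ (Fin n)) F,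
        ‖(∫ y, cutoffMollifier φ χ ε y • A (fun _ ↦ y)) - ε ^ j • ∫ z, φ z • A (fun _ ↦ z)‖
          ≤ C * ‖A‖ * ε ^ N := by
  obtain ⟨Cχ, hCχ0, hCχ⟩ := exists_abs_sub_one_le_mul_norm_pow hχc hχsupp hχone N
  have hS0 : 0 ≤ ∫ z, ‖z‖ ^ (N + j) * ‖φ z‖ := integral_nonneg fun z ↦ by positivity
  refine ⟨Cχ * ∫ z, ‖z‖ ^ (N + j) * ‖φ z‖, by positivity, fun ε ⟨hε0, hε1⟩ A ↦ ?_⟩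
  have hA : ∀ z, ‖A (fun _ ↦ z)‖ ≤ ‖A‖ * ‖z‖ ^ j := fun z ↦ (A.le_opNorm _).trans (by simp)
  have hAc : Continuous fun z : EuclideanSpace ℝ (Fin n) ↦ A (fun _ ↦ z) := by fun_prop
  have hχε : Continuous fun z : EuclideanSpace ℝ (Fin n) ↦ χ (ε • z) :=
    hχc.comp (continuous_const_smul ε)
  obtain ⟨B, hB⟩ := hχsupp.exists_bound_of_continuous hχc
  have hint₁ : Integrable fun z ↦ φ z • (χ (ε • z) • A (fun _ ↦ z)) :=
    φ.integrable_smul_of_norm_le_pow (hχε.smul hAc) (C := B * ‖A‖) fun z ↦ by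
      rw [norm_smul, mul_assoc]
      exact mul_le_mul (hB _) (hA z) (norm_nonneg _) ((norm_nonneg _).trans (hB 0))
  have hint₀ : Integrable fun z ↦ φ z • A (fun _ ↦ z) := φ.integrable_smul_of_norm_le_pow hAc hA
  have hsplit :
      (∫ y, cutoffMollifier φ χ ε y • A (fun _ ↦ y)) - ε ^ j • ∫ z, φ z • A (fun _ ↦ z)
        = ε ^ j • ∫ z, φ z • ((χ (ε • z) - 1) • A (fun _ ↦ z)) := by
    have hhom : ∀ z : EuclideanSpace ℝ (Fin n), A (fun _ ↦ ε • z) = ε ^ j • A (fun _ ↦ z) := by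
      intro z
      simpa using A.map_smul_univ (fun _ ↦ ε) fun _ ↦ z
    have hscale : ∫ y, cutoffMollifier φ χ ε y • A (fun _ ↦ y)
        = ε ^ j • ∫ z, φ z • (χ (ε • z) • A (fun _ ↦ z)) := by
      rw [integral_cutoffMollifier_smul hε0, ← integral_smul]
      congr 1 with z
      rw [hhom, smul_comm (χ _), smul_comm (φ z)]
    rw [hscale, ← smul_sub, ← integral_sub hint₁ hint₀]
    congr 2 with z
    rw [sub_smul, one_smul, smul_sub]
  have hbound : ∀ z, ‖φ z • ((χ (ε • z) - 1) • A (fun _ ↦ z))‖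
      ≤ (Cχ * ‖A‖ * ε ^ N) * (‖z‖ ^ (N + j) * ‖φ z‖) := by
    intro z
    have h1 := hCχ (ε • z)
    rw [norm_smul, Real.norm_of_nonneg hε0.le, mul_pow] at h1
    rw [norm_smul, norm_smul, Real.norm_eq_abs (χ _ - 1)]
    calc ‖φ z‖ * (|χ (ε • z) - 1| * ‖A (fun _ ↦ z)‖)
        ≤ ‖φ z‖ * ((Cχ * (ε ^ N * ‖z‖ ^ N)) * (‖A‖ * ‖z‖ ^ j)) := by gcongr; exact hA z
      _ = (Cχ * ‖A‖ * ε ^ N) * (‖z‖ ^ (N + j) * ‖φ z‖) := by ring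
  rw [hsplit, norm_smul, Real.norm_of_nonneg (by positivity)]
  calc ε ^ j * ‖∫ z, φ z • ((χ (ε • z) - 1) • A (fun _ ↦ z))‖
      ≤ 1 * ∫ z, (Cχ * ‖A‖ * ε ^ N) * (‖z‖ ^ (N + j) * ‖φ z‖) :=
        mul_le_mul (pow_le_one₀ hε0.le hε1) (norm_integral_le_of_norm_le
          ((φ.integrable_pow_mul volume _).const_mul _) (ae_of_all _ hbound)) (norm_nonneg _)
          zero_le_one
    _ = Cχ * (∫ z, ‖z‖ ^ (N + j) * ‖φ z‖) * ‖A‖ * ε ^ N := by rw [integral_const_mul]; ring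

theorem integral_smul_multilinear_eq_zero [CompleteSpace F]
    (hφmom : ∀ α : Fin n → ℕ, 1 ≤ ∑ i, α i →
      ∫ x : EuclideanSpace ℝ (Fin n), (∏ i, x i ^ α i) * φ x = 0)
    {j : ℕ} (hj : j ≠ 0)
    (A : ContinuousMultilinearMap ℝ (fun _ : Fin j ↦ EuclideanSpace ℝ (Fin n)) F) :
    ∫ z, φ z • A (fun _ ↦ z) = 0 := by
  set e : Fin n → EuclideanSpace ℝ (Fin n) := fun i ↦ EuclideanSpace.single i 1
  have hexpand : ∀ z : EuclideanSpace ℝ (Fin n),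
      A (fun _ ↦ z) = ∑ v : Fin j → Fin n, (∏ k, z (v k)) • A (fun k ↦ e (v k)) := by
    intro z
    conv_lhs => rw [← (EuclideanSpace.basisFun (Fin n) ℝ).sum_repr z]
    simp [e, A.map_sum, A.map_smul_univ]
  have hmonomial : ∀ (v : Fin j → Fin n) (z : EuclideanSpace ℝ (Fin n)),
      ∏ k, z (v k) = ∏ i, z i ^ (Finset.univ.filter fun k ↦ v k = i).card := by
    intro v z
    rw [← Finset.prod_fiberwise_of_maps_to' (t := Finset.univ)
      (fun k _ ↦ Finset.mem_univ (v k))]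
    simp
  have hmoment : ∀ v : Fin j → Fin n, ∫ z, φ z * ∏ k, z (v k) = 0 := by
    intro v
    simp_rw [mul_comm (φ _), hmonomial v]
    refine hφmom _ ?_
    rw [← Finset.card_eq_sum_card_fiberwise fun k _ ↦ Finset.mem_univ (v k)]
    simpa [Nat.one_le_iff_ne_zero] using hj
  have hint : ∀ v : Fin j → Fin n, Integrable fun z ↦ φ z * ∏ k, z (v k) := by
    intro v
    refine φ.integrable_smul_of_norm_le_pow (C := 1) (a := j) (by fun_prop) fun z ↦ ?_
    rw [norm_prod, one_mul]
    calc ∏ k, ‖z (v k)‖ ≤ ∏ _k : Fin j, ‖z‖ :=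
          Finset.prod_le_prod (fun _ _ ↦ norm_nonneg _) fun k _ ↦ PiLp.norm_apply_le z (v k)
      _ = ‖z‖ ^ j := by simp
  simp_rw [hexpand, Finset.smul_sum, smul_smul]
  rw [integral_finsetSum _ fun v _ ↦ (hint v).smul_const _]
  exact Finset.sum_eq_zero fun v _ ↦ by rw [integral_smul_const, hmoment, zero_smul]

theorem sum_pow_smul_integral_smul_multilinear [CompleteSpace F]
    (hφ1 : ∫ x : EuclideanSpace ℝ (Fin n), φ x = 1)
    (hφmom : ∀ α : Fin n → ℕ, 1 ≤ ∑ i, α i →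
      ∫ x : EuclideanSpace ℝ (Fin n), (∏ i, x i ^ α i) * φ x = 0)
    (A : (j : ℕ) → ContinuousMultilinearMap ℝ (fun _ : Fin j ↦ EuclideanSpace ℝ (Fin n)) F)
    (N : ℕ) (ε : ℝ) :
    ∑ j ∈ Finset.range (N + 1), ε ^ j • ∫ z, φ z • A j (fun _ ↦ z) = A 0 0 := by
  rw [Finset.sum_eq_single_of_mem 0 (by simp) fun j _ hj ↦ by
    rw [integral_smul_multilinear_eq_zero hφmom hj, smul_zero]]
  have hconst : ∀ z, A 0 (fun _ ↦ z) = A 0 0 := fun z ↦ congrArg (A 0) (Subsingleton.elim _ _)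
  simp only [pow_zero, one_smul, hconst, integral_smul_const, hφ1]

theorem convolution_cutoffMollifier_sub_eq [CompleteSpace F]
    (hφ1 : ∫ x : EuclideanSpace ℝ (Fin n), φ x = 1)
    (hφmom : ∀ α : Fin n → ℕ, 1 ≤ ∑ i, α i →
      ∫ x : EuclideanSpace ℝ (Fin n), (∏ i, x i ^ α i) * φ x = 0)
    (hχc : Continuous χ) (hχsupp : HasCompactSupport χ)
    {g : EuclideanSpace ℝ (Fin n) → F} (hg : Continuous g) (x : EuclideanSpace ℝ (Fin n))
    (A : (j : ℕ) → ContinuousMultilinearMap ℝ (fun _ : Fin j ↦ EuclideanSpace ℝ (Fin n)) F)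
    (hA₀ : A 0 0 = g x) (N : ℕ) :
    (cutoffMollifier φ χ ε ⋆[lsmul ℝ ℝ] g) x - g x
      = (∫ y, cutoffMollifier φ χ ε y •
          (g (x - y) - ∑ j ∈ Finset.range (N + 1), A j (fun _ ↦ y)))
        + ∑ j ∈ Finset.range (N + 1), ((∫ y, cutoffMollifier φ χ ε y • A j (fun _ ↦ y))
            - ε ^ j • ∫ z, φ z • A j (fun _ ↦ z)) := by
  have hmoll := continuous_cutoffMollifier (φ := φ) (ε := ε) hχc
  have hmsupp := hasCompactSupport_cutoffMollifier (φ := φ) (ε := ε) hχsupp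
  have hintA : ∀ j, Integrable fun y ↦ cutoffMollifier φ χ ε y • A j (fun _ ↦ y) := fun j ↦
    (hmoll.smul (by fun_prop)).integrable_of_hasCompactSupport hmsupp.smul_right
  have hintg : Integrable fun y ↦ cutoffMollifier φ χ ε y • g (x - y) :=
    (hmoll.smul (hg.comp (continuous_sub_left x))).integrable_of_hasCompactSupport
      hmsupp.smul_right
  rw [convolution_lsmul, Finset.sum_sub_distrib,
    sum_pow_smul_integral_smul_multilinear hφ1 hφmom, hA₀, ← integral_finsetSum _ fun j _ ↦ hintA j]
  simp_rw [smul_sub, Finset.smul_sum]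
  rw [integral_sub hintg (integrable_finsetSum _ fun j _ ↦ hintA j)]
  abel

theorem exists_norm_convolution_cutoffMollifier_sub_le [CompleteSpace F]
    (hφ1 : ∫ x : EuclideanSpace ℝ (Fin n), φ x = 1)
    (hφmom : ∀ α : Fin n → ℕ, 1 ≤ ∑ i, α i →
      ∫ x : EuclideanSpace ℝ (Fin n), (∏ i, x i ^ α i) * φ x = 0)
    (hχc : Continuous χ) (hχsupp : HasCompactSupport χ) (hχone : ∀ᶠ y in 𝓝 0, χ y = 1)
    {g : EuclideanSpace ℝ (Fin n) → F} (hg : ContDiff ℝ ∞ g)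
    {K : Set (EuclideanSpace ℝ (Fin n))} (hK : IsCompact K) (N : ℕ) :
    ∃ C, ∀ ε ∈ Ioc (0 : ℝ) 1, ∀ x ∈ K,
      ‖(cutoffMollifier φ χ ε ⋆[lsmul ℝ ℝ] g) x - g x‖ ≤ C * ε ^ N := by
  -- `A x j` is the `j`-th Taylor coefficient of `y ↦ g (x - y)` at `0`
  let A (x : EuclideanSpace ℝ (Fin n)) (j : ℕ) :
      ContinuousMultilinearMap ℝ (fun _ : Fin j ↦ EuclideanSpace ℝ (Fin n)) F :=
    ((-1) ^ j * (j.factorial : ℝ)⁻¹) • iteratedFDeriv ℝ j g x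
  have hA : ∀ x y j,
      A x j (fun _ ↦ y) = (j.factorial : ℝ)⁻¹ • iteratedFDeriv ℝ j g x (fun _ ↦ -y) := by
    intro x y j
    have hneg := (iteratedFDeriv ℝ j g x).map_smul_univ (fun _ ↦ (-1 : ℝ)) fun _ ↦ y
    simp only [neg_one_smul, Finset.prod_const, Finset.card_univ, Fintype.card_fin] at hneg
    simp [A, hneg, smul_smul, mul_comm]
  have hAc : ∀ j, Continuous fun x ↦ A x j := fun j ↦
    (hg.continuous_iteratedFDeriv (mod_cast le_top)).const_smul
      ((-1) ^ j * (j.factorial : ℝ)⁻¹)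
  obtain ⟨CT, hCT0, hCT⟩ := hK.exists_norm_sub_sum_iteratedFDeriv_le (N := N)
    (hg.of_le (mod_cast le_top)) hχsupp.isCompact.neg
  obtain ⟨CR, hCR0, hCR⟩ :=
    exists_norm_integral_cutoffMollifier_smul_le (φ := φ) (F := F) hχc hχsupp (N + 1)
  choose CP hCP0 hCP using fun j ↦
    exists_norm_integral_cutoffMollifier_smul_multilinear_sub_le (φ := φ) (F := F) hχc hχsupp
      hχone j N
  choose MA hMA using fun j ↦ hK.exists_bound_of_continuousOn (hAc j).continuousOn
  refine ⟨CR * CT + ∑ j ∈ Finset.range (N + 1), CP j * MA j, fun ε hε x hx ↦ ?_⟩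
  have hremainder : ∀ y ∈ tsupport χ,
      ‖g (x - y) - ∑ j ∈ Finset.range (N + 1), A x j (fun _ ↦ y)‖ ≤ CT * ‖y‖ ^ (N + 1) := by
    intro y hy
    simpa [hA, sub_eq_add_neg] using hCT x hx (-y) (Set.neg_mem_neg.mpr hy)
  rw [convolution_cutoffMollifier_sub_eq hφ1 hφmom hχc hχsupp hg.continuous x (A x)
    (by simp [A])]
  calc _ ≤ CR * CT * ε ^ (N + 1) + ∑ j ∈ Finset.range (N + 1), CP j * MA j * ε ^ N :=
        (norm_add_le _ _).trans (add_le_add (hCR ε hε.1 CT hCT0 _ hremainder)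
          ((norm_sum_le _ _).trans (Finset.sum_le_sum fun j _ ↦
            (hCP j ε hε (A x j)).trans (mul_le_mul_of_nonneg_right
              (mul_le_mul_of_nonneg_left (hMA j x hx) (hCP0 j)) (pow_nonneg hε.1.le N)))))
    _ ≤ (CR * CT + ∑ j ∈ Finset.range (N + 1), CP j * MA j) * ε ^ N := by
        rw [add_mul, Finset.sum_mul]
        exact add_le_add_left (mul_le_mul_of_nonneg_left
          (pow_le_pow_of_le_one hε.1.le hε.2 N.le_succ) (by positivity)) _

end Mollifier

/-- The Colombeau imbedding by convolution with a mollifier with vanishing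
higher moments coincides with the constant imbedding on smooth functions:
`ι(f) = σ(f)`, i.e. `(f ⋆ (χ φ_ε)) − f` is a null net. -/
theorem iota_eq_sigma_on_smooth {n : ℕ}
    (φ : SchwartzMap (EuclideanSpace ℝ (Fin n)) ℝ)
    (hφ1 : ∫ x : EuclideanSpace ℝ (Fin n), φ x = 1)
    (hφmom : ∀ α : Fin n → ℕ, 1 ≤ ∑ i, α i →
      ∫ x : EuclideanSpace ℝ (Fin n), (∏ i, x i ^ α i) * φ x = 0)
    (χ : EuclideanSpace ℝ (Fin n) → ℝ)
    (hχsmooth : ContDiff ℝ (⊤ : ℕ∞) χ) (hχsupp : HasCompactSupport χ)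
    (hχone : ∀ᶠ y in 𝓝 (0 : EuclideanSpace ℝ (Fin n)), χ y = 1)
    (f : EuclideanSpace ℝ (Fin n) → ℝ) (hf : ContDiff ℝ (⊤ : ℕ∞) f)
    (u : ℝ → EuclideanSpace ℝ (Fin n) → ℝ)
    (hudef : ∀ ε ∈ Set.Ioc (0:ℝ) 1, ∀ x : EuclideanSpace ℝ (Fin n),
      u ε x = ∫ y : EuclideanSpace ℝ (Fin n),
        f (x - y) * (χ y * ((ε ^ n)⁻¹ * φ (ε⁻¹ • y)))) :
    NullNet (fun ε x => u ε x - f x) := by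
  have hu : ∀ ε ∈ Ioc (0 : ℝ) 1, u ε = cutoffMollifier φ χ ε ⋆[lsmul ℝ ℝ] f := fun ε hε ↦
    funext fun x ↦ by
      rw [hudef ε hε x, convolution_lsmul]
      simp only [cutoffMollifier, smul_eq_mul, mul_comm (f _)]
  have hsmooth : ∀ ε ∈ Ioc (0 : ℝ) 1, ContDiff ℝ ∞ (u ε) := fun ε hε ↦ hu ε hε ▸
    (hasCompactSupport_cutoffMollifier hχsupp).contDiff_convolution_left _
      (contDiff_cutoffMollifier hχsmooth) hf.continuous.locallyIntegrable
  refine ⟨fun ε hε ↦ (hsmooth ε hε).sub hf, fun K hK k q _ ↦ ?_⟩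
  obtain ⟨C, hC⟩ := exists_norm_convolution_cutoffMollifier_sub_le hφ1 hφmom
    hχsmooth.continuous hχsupp hχone (hf.iteratedFDeriv_right (i := k) (m := ∞) le_rfl) hK
    ⌈q⌉₊
  refine ⟨max C 1, by positivity, 1, one_pos, fun ε hε _ x hx ↦ ?_⟩
  have hderiv : iteratedFDeriv ℝ k (fun x ↦ u ε x - f x) x
      = (cutoffMollifier φ χ ε ⋆[lsmul ℝ ℝ] iteratedFDeriv ℝ k f) x - iteratedFDeriv ℝ k f x := by
    rw [← iteratedFDeriv_convolution_lsmul (hasCompactSupport_cutoffMollifier hχsupp)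
      (continuous_cutoffMollifier hχsmooth.continuous) hf, ← hu ε hε]
    exact iteratedFDeriv_sub_apply ((hsmooth ε hε).contDiffAt.of_le (mod_cast le_top))
      (hf.contDiffAt.of_le (mod_cast le_top))
  have hεq : ε ^ ⌈q⌉₊ ≤ ε ^ q := by
    rw [← Real.rpow_natCast]
    exact Real.rpow_le_rpow_of_exponent_ge hε.1 hε.2 (Nat.le_ceil q)
  rw [hderiv]
  exact (hC ε hε x hx).trans (mul_le_mul (le_max_left C 1) hεq (pow_nonneg hε.1.le _)
    (by positivity))
end
end
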